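/- arXiv:1311.7150 — 4 statements merged into one kernel-verified Lean document; each statement's English description precedes it below -/
import Mathlib

section
/- For all k ≥ 1 and all n > k, the group IA_n(k) is not generated by the set of its elements that are supported on splittings of F_n of rank less than k; that is, the subgroup of IA_n(k) generated by all elements of IA_n(k) supported on some splitting of rank < k is a proper subgroup of IA_n(k). -/
/-!
The Magnus expansion `x_a ↦ 1 + X_a` of `F_n` into noncommutative polynomials truncated above
degree `k + 1` turns `φ ∈ IA_n(k)` into the top-degree elements `τ_φ(g) = μ(φ(g) g⁻¹) - 1`,
additive both in `g` and in `φ`. Compose with the functional that reads off the words `X_0 u` and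
takes the determinant of the incidence matrix of the letters of `u` against `X_1, …, X_k`; it is
alternating in those `k` letters. If `φ` is supported on `A ∗ B` with `A` generated by fewer than
`k` elements, then `τ_φ` vanishes on `B`, and on `A` it is computed through the retraction onto
`A`, so its values lie in `V ^ (k + 1)` for a space `V` of linear polynomials of dimension `< k`,
where the functional vanishes. So `φ ↦ functional (τ_φ(x_k))` is a homomorphism on `IA_n(k)`
killing all such `φ`. But conjugation by `⁅x_0, x_1, …, x_{k-1}⁆` lies in `IA_n(k)`, and `τ` sends
it to the Lie bracket `⁅X_0, X_1, …, X_k⁆`, whose only word beginning with `X_0` is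
`X_0 X_1 ⋯ X_k`: the value is `1`.
-/

section Base

variable {G : Type*} [Group G]

instance lowerCentralSeries_characteristic (k : ℕ) :
    ((⊤ : Subgroup G).lowerCentralSeries k).Characteristic := by
  induction k with
  | zero => exact Subgroup.topCharacteristic
  | succ n ih => exact @Subgroup.commutator_characteristic G _ _ ⊤ ih Subgroup.topCharacteristic

theorem char_apply {H : Subgroup G} [H.Characteristic] (φ : MulAut G) {x : G} (hx : x ∈ H) :
    φ x ∈ H := by
  have h : H.comap φ.toMonoidHom = H := Subgroup.characteristic_iff_comap_eq.mp inferInstance φ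
  rw [← h] at hx
  exact hx

/-- The kernel of the action of `MulAut G` on `G ⧸ H`, for a subgroup `H` invariant under
all automorphisms: the automorphisms acting trivially on `G ⧸ H`. -/
def autActKernel (H : Subgroup G) (hchar : ∀ (φ : MulAut G) (x : G), x ∈ H → φ x ∈ H) :
    Subgroup (MulAut G) where
  carrier := {φ | ∀ x : G, φ x * x⁻¹ ∈ H}
  one_mem' := by
    intro x
    simpa using H.one_mem
  mul_mem' := by
    intro a b ha hb x
    have h2 := H.mul_mem (hchar a _ (hb x)) (ha x)
    have heq : a (b x * x⁻¹) * (a x * x⁻¹) = (a * b) x * x⁻¹ := by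
      simp [map_mul, map_inv, mul_assoc]
    rwa [heq] at h2
  inv_mem' := by
    intro a ha x
    have h1 : a⁻¹ ((a x * x⁻¹)⁻¹) ∈ H := hchar a⁻¹ _ (H.inv_mem (ha x))
    have heq : a⁻¹ ((a x * x⁻¹)⁻¹) = a⁻¹ x * x⁻¹ := by
      simp [map_mul, map_inv, mul_inv_rev]
    rwa [heq] at h1

end Base

/-- `IAF n k` is the `k`-th term `IA_n(k)` of the Johnson filtration of `Aut(F_n)`:
the kernel of the action of `Aut(F_n)` on `F_n ⧸ γ_{k+1}(F_n)`.  (Here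
`γ_{k+1}(F_n) = lowerCentralSeries (FreeGroup (Fin n)) k` since `γ_1 = lowerCentralSeries _ 0`.) -/
def IAF (n k : ℕ) : Subgroup (MulAut (FreeGroup (Fin n))) :=
  autActKernel ((⊤ : Subgroup (FreeGroup (Fin n))).lowerCentralSeries k) fun φ _ hx => char_apply φ hx

/-- `A` and `B` give a splitting of `F` as an internal free product `F = A ∗ B`. -/
def IsFreeProductPair {F : Type*} [Group F] (A B : Subgroup F) : Prop :=
  Function.Bijective (Monoid.Coprod.lift A.subtype B.subtype)

/-- `φ` is supported on the splitting `A ∗ B`: it preserves `A` and restricts to the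
identity on `B`. -/
def SupportedOn {F : Type*} [Group F] (φ : MulAut F) (A B : Subgroup F) : Prop :=
  A.map φ.toMonoidHom = A ∧ ∀ x ∈ B, φ x = x

/-- The subgroup `A` is generated by at most `r` elements; for a free group this says
exactly that the rank of `A` is at most `r`. -/
def RankLe {F : Type*} [Group F] (A : Subgroup F) (r : ℕ) : Prop :=
  ∃ S : Finset F, S.card ≤ r ∧ Subgroup.closure (S : Set F) = A

open scoped commutatorElement

section RingIdentities

variable {A : Type*} [Ring A]

lemma mul_sub_one_eq (a b : A) : a * b - 1 = (a - 1) * (b - 1) + (a - 1) + (b - 1) := by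
  noncomm_ring

lemma commute_of_sub_one_mul_sub_one {a b : A} (h : (a - 1) * (b - 1) = (b - 1) * (a - 1)) :
    Commute a b :=
  sub_left_inj.1 <| by rw [mul_sub_one_eq, mul_sub_one_eq b, h, add_right_comm]

lemma mul_mul_mul_sub_one_eq {a b a' b' : A} (ha : a * a' = 1) (hb : b * b' = 1) :
    a * b * a' * b' - 1 = ((a - 1) * (b - 1) - (b - 1) * (a - 1)) * (a' * b') := by
  have hc : (a - 1) * (b - 1) - (b - 1) * (a - 1) = a * b - b * a := by noncomm_ring
  have hvu : b * a * (a' * b') = 1 := by rw [mul_assoc b, ← mul_assoc a, ha, one_mul, hb]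
  rw [hc, sub_mul, hvu]
  simp only [mul_assoc]

end RingIdentities

section IteratedBracket

variable {L : Type*} [Bracket L L]

def iteratedBracket (a : L) (l : List L) : L := l.foldl (fun x y => ⁅x, y⁆) a

lemma iteratedBracket_append_singleton (a : L) (l : List L) (b : L) :
    iteratedBracket a (l ++ [b]) = ⁅iteratedBracket a l, b⁆ :=
  List.foldl_concat _ _ _ _

lemma iteratedBracket_mem_lowerCentralSeries {G : Type*} [Group G] (a : G) (l : List G) :
    iteratedBracket a l ∈ (⊤ : Subgroup G).lowerCentralSeries l.length := by
  induction l using List.reverseRecOn with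
  | nil => exact Subgroup.mem_top a
  | append_singleton l b ih =>
    rw [iteratedBracket_append_singleton, List.length_append, List.length_singleton,
      Subgroup.lowerCentralSeries_succ]
    exact Subgroup.commutator_mem_commutator ih (Subgroup.mem_top b)

end IteratedBracket

section LowerCentralSeries

variable {G : Type*} [Group G]

lemma commutatorElement_mul_left_of_mem_center {u : G} (hu : u ∈ Subgroup.center G) (p y : G) :
    ⁅u * p, y⁆ = ⁅p, y⁆ := by
  rw [commutatorElement_def, commutatorElement_def]
  calc u * p * y * (u * p)⁻¹ * y⁻¹ = u * (p * y * p⁻¹) * u⁻¹ * y⁻¹ := by group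
    _ = p * y * p⁻¹ * y⁻¹ := by rw [← Subgroup.mem_center_iff.1 hu, mul_inv_cancel_right]

lemma commutatorElement_mul_right_of_mem_center {v : G} (hv : v ∈ Subgroup.center G) (p y : G) :
    ⁅p, v * y⁆ = ⁅p, y⁆ := by
  rw [← commutatorElement_inv, commutatorElement_mul_left_of_mem_center hv, commutatorElement_inv]

theorem mul_inv_mem_lowerCentralSeries_succ (φ : G →* G) {k : ℕ} (hk : 1 ≤ k)
    (hφ : ∀ x, φ x * x⁻¹ ∈ (⊤ : Subgroup G).lowerCentralSeries k) {j : ℕ} (hj : j ≤ k) {g : G}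
    (hg : g ∈ (⊤ : Subgroup G).lowerCentralSeries j) :
    φ g * g⁻¹ ∈ (⊤ : Subgroup G).lowerCentralSeries (j + 1) := by
  induction j generalizing g with
  | zero => exact Subgroup.lowerCentralSeries_antitone _ hk (hφ g)
  | succ j ih =>
    let π := QuotientGroup.mk' ((⊤ : Subgroup G).lowerCentralSeries (j + 2))
    have hcenter {c : G} (hc : c ∈ (⊤ : Subgroup G).lowerCentralSeries (j + 1)) :
        π c ∈ Subgroup.center _ := by
      refine Subgroup.mem_center_iff.2 fun z => ?_
      obtain ⟨y, rfl⟩ := QuotientGroup.mk'_surjective _ z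
      refine (commutatorElement_eq_one_iff_commute.1 ?_).symm
      rw [← map_commutatorElement, QuotientGroup.mk'_apply, QuotientGroup.eq_one_iff]
      exact Subgroup.commutator_mem_commutator hc (Subgroup.mem_top y)
    have hπ (x : G) : π (φ x) = π (φ x * x⁻¹) * π x := by
      rw [← map_mul, inv_mul_cancel_right]
    -- `φ` moves `p` and `q` by elements central modulo `lowerCentralSeries (j + 2)`.
    have key : (⊤ : Subgroup G).lowerCentralSeries (j + 1) ≤ MonoidHom.eqLocus (π.comp φ) π := by
      rw [Subgroup.lowerCentralSeries_succ, Subgroup.commutator_le]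
      intro p hp q _
      have hpφ := ih (by omega) hp
      have hqφ := Subgroup.lowerCentralSeries_antitone _ hj (hφ q)
      change π (φ ⁅p, q⁆) = π ⁅p, q⁆
      rw [map_commutatorElement, map_commutatorElement, map_commutatorElement, hπ p, hπ q,
        commutatorElement_mul_left_of_mem_center (hcenter hpφ),
        commutatorElement_mul_right_of_mem_center (hcenter hqφ)]
    have hg' : π (φ g) = π g := key hg
    rw [← QuotientGroup.eq_one_iff, ← QuotientGroup.mk'_apply, map_mul, map_inv, hg',
      mul_inv_cancel]

end LowerCentralSeries

namespace IsFreeProductPair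

variable {F : Type*} [Group F] {A B : Subgroup F}

noncomputable def retraction (h : IsFreeProductPair A B) : F →* A :=
  Monoid.Coprod.fst.comp (MulEquiv.ofBijective _ h).symm.toMonoidHom

lemma retraction_apply_coe (h : IsFreeProductPair A B) (a : A) : h.retraction a = a := by
  have : (MulEquiv.ofBijective _ h).symm a = Monoid.Coprod.inl a :=
    (MulEquiv.symm_apply_eq _).2 (Monoid.Coprod.lift_apply_inl A.subtype B.subtype a).symm
  simp [retraction, this]

lemma sup_eq_top (h : IsFreeProductPair A B) : A ⊔ B = ⊤ := by
  rw [← MonoidHom.range_eq_top.2 h.2, Monoid.Coprod.range_lift, Subgroup.range_subtype,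
    Subgroup.range_subtype]

end IsFreeProductPair

abbrev NCPoly (R α : Type*) [CommRing R] := MonoidAlgebra R (FreeMonoid α)

namespace NCPoly

open MonoidAlgebra

variable {R : Type*} [CommRing R] {α : Type*}

section Degree

variable (R α) in
noncomputable def degreeGE (m : ℕ) : Submodule R (NCPoly R α) :=
  MonoidAlgebra.supported R R {w : FreeMonoid α | m ≤ w.length}

variable (R α) in
noncomputable def homogeneous (m : ℕ) : Submodule R (NCPoly R α) :=
  MonoidAlgebra.supported R R {w : FreeMonoid α | w.length = m}

variable (R) in
noncomputable def X (a : α) : NCPoly R α := single (FreeMonoid.of a) 1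

lemma mem_degreeGE {m : ℕ} {p : NCPoly R α} :
    p ∈ degreeGE R α m ↔ ∀ w ∈ p.coeff.support, m ≤ w.length := Iff.rfl

lemma mem_homogeneous {m : ℕ} {p : NCPoly R α} :
    p ∈ homogeneous R α m ↔ ∀ w ∈ p.coeff.support, w.length = m := Iff.rfl

lemma degreeGE_anti {a b : ℕ} (h : a ≤ b) : degreeGE R α b ≤ degreeGE R α a :=
  MonoidAlgebra.supported_mono fun _ hw => le_trans h hw

lemma mem_degreeGE_zero (p : NCPoly R α) : p ∈ degreeGE R α 0 :=
  mem_degreeGE.2 fun _ _ => Nat.zero_le _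

lemma homogeneous_le_degreeGE (m : ℕ) : homogeneous R α m ≤ degreeGE R α m :=
  MonoidAlgebra.supported_mono fun _ hw => (hw : _ = m).ge

lemma X_mem_homogeneous (a : α) : X R a ∈ homogeneous R α 1 :=
  Finsupp.single_mem_supported R 1 rfl

lemma X_mem_degreeGE (a : α) : X R a ∈ degreeGE R α 1 :=
  homogeneous_le_degreeGE 1 (X_mem_homogeneous a)

lemma mul_mem_degreeGE {a b : ℕ} {p q : NCPoly R α} (hp : p ∈ degreeGE R α a)
    (hq : q ∈ degreeGE R α b) : p * q ∈ degreeGE R α (a + b) := by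
  classical
  refine mem_degreeGE.2 fun w hw => ?_
  obtain ⟨u, hu, v, hv, rfl⟩ := Finset.mem_mul.1 (support_coeff_mul_subset p q hw)
  rw [FreeMonoid.length_mul]
  exact Nat.add_le_add (mem_degreeGE.1 hp u hu) (mem_degreeGE.1 hq v hv)

lemma mul_mem_degreeGE_left {j : ℕ} (p : NCPoly R α) {q : NCPoly R α}
    (hq : q ∈ degreeGE R α j) : p * q ∈ degreeGE R α j := by
  simpa using mul_mem_degreeGE (mem_degreeGE_zero p) hq

lemma mul_mem_degreeGE_right {j : ℕ} {p : NCPoly R α} (hp : p ∈ degreeGE R α j)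
    (q : NCPoly R α) : p * q ∈ degreeGE R α j :=
  mul_mem_degreeGE hp (mem_degreeGE_zero q)

lemma mul_mem_homogeneous {a b : ℕ} {p q : NCPoly R α} (hp : p ∈ homogeneous R α a)
    (hq : q ∈ homogeneous R α b) : p * q ∈ homogeneous R α (a + b) := by
  classical
  refine mem_homogeneous.2 fun w hw => ?_
  obtain ⟨u, hu, v, hv, rfl⟩ := Finset.mem_mul.1 (support_coeff_mul_subset p q hw)
  rw [FreeMonoid.length_mul, mem_homogeneous.1 hp u hu, mem_homogeneous.1 hq v hv]

lemma pow_mem_degreeGE {p : NCPoly R α} (hp : p ∈ degreeGE R α 1) (j : ℕ) :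
    p ^ j ∈ degreeGE R α j := by
  induction j with
  | zero => exact mem_degreeGE_zero _
  | succ j ih => rw [pow_succ]; exact mul_mem_degreeGE ih hp

lemma homogeneous_one_le_span_X : homogeneous R α 1 ≤ Submodule.span R (Set.range (X R)) := by
  rw [homogeneous, MonoidAlgebra.supported_eq_span_single, Submodule.span_le]
  rintro _ ⟨w, hw, rfl⟩
  obtain ⟨a, rfl⟩ : ∃ a, w = FreeMonoid.of a := by
    obtain ⟨a, ha⟩ := List.length_eq_one_iff.1 (show w.toList.length = 1 from hw)
    exact ⟨a, FreeMonoid.toList.injective ha⟩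
  exact Submodule.subset_span ⟨a, rfl⟩

variable (R α) in
noncomputable def homComponent (m : ℕ) : NCPoly R α →ₗ[R] NCPoly R α where
  toFun p := ofCoeff (p.coeff.filter fun w => w.length = m)
  map_add' _ _ := congrArg ofCoeff (Finsupp.filter_add)
  map_smul' _ _ := congrArg ofCoeff (Finsupp.filter_smul)

lemma coeff_homComponent (m : ℕ) (p : NCPoly R α) (w : FreeMonoid α) :
    (homComponent R α m p).coeff w = if w.length = m then p.coeff w else 0 :=
  Finsupp.filter_apply _ _ _

lemma homComponent_mem_homogeneous (m : ℕ) (p : NCPoly R α) :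
    homComponent R α m p ∈ homogeneous R α m := by
  refine mem_homogeneous.2 fun w hw => ?_
  by_contra hne
  exact Finsupp.mem_support_iff.1 hw (by rw [coeff_homComponent, if_neg hne])

lemma homComponent_eq_self {m : ℕ} {p : NCPoly R α} (hp : p ∈ homogeneous R α m) :
    homComponent R α m p = p := by
  ext w
  rw [coeff_homComponent]
  split_ifs with hw
  · rfl
  · exact (Finsupp.notMem_support_iff.1 fun h => hw (mem_homogeneous.1 hp w h)).symm

lemma homComponent_eq_zero {a m : ℕ} {p : NCPoly R α} (hp : p ∈ degreeGE R α a) (hm : m < a) :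
    homComponent R α m p = 0 := by
  ext w
  rw [coeff_homComponent, coeff_zero, Finsupp.zero_apply]
  split_ifs with hw
  · exact Finsupp.notMem_support_iff.1 fun h => by have := mem_degreeGE.1 hp w h; omega
  · rfl

lemma sub_homComponent_mem_degreeGE {m : ℕ} {p : NCPoly R α} (hp : p ∈ degreeGE R α m) :
    p - homComponent R α m p ∈ degreeGE R α (m + 1) := by
  refine mem_degreeGE.2 fun w hw => ?_
  have hw' := Finsupp.mem_support_iff.1 hw
  rw [coeff_sub, Finsupp.sub_apply, coeff_homComponent] at hw'
  split_ifs at hw' with hlen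
  · exact absurd (sub_self _) hw'
  · have := mem_degreeGE.1 hp w (Finsupp.mem_support_iff.2 (by simpa using hw'))
    omega

lemma homComponent_mul {a b : ℕ} {p q : NCPoly R α} (hp : p ∈ degreeGE R α a)
    (hq : q ∈ degreeGE R α b) :
    homComponent R α (a + b) (p * q) = homComponent R α a p * homComponent R α b q := by
  set p₀ := homComponent R α a p
  set q₀ := homComponent R α b q
  have hsplit : p * q = p₀ * q₀ + (p₀ * (q - q₀) + (p - p₀) * q) := by noncomm_ring
  have h₁ : homComponent R α (a + b) (p₀ * (q - q₀)) = 0 :=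
    homComponent_eq_zero (mul_mem_degreeGE (homogeneous_le_degreeGE a
      (homComponent_mem_homogeneous a p)) (sub_homComponent_mem_degreeGE hq)) (by omega)
  have h₂ : homComponent R α (a + b) ((p - p₀) * q) = 0 :=
    homComponent_eq_zero (mul_mem_degreeGE (sub_homComponent_mem_degreeGE hp) hq) (by omega)
  rw [hsplit, map_add, map_add, h₁, h₂, add_zero, add_zero, homComponent_eq_self
    (mul_mem_homogeneous (homComponent_mem_homogeneous a p) (homComponent_mem_homogeneous b q))]

end Degree

section Truncation

variable (R α) in
def truncCon (m : ℕ) : RingCon (NCPoly R α) where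
  r p q := p - q ∈ degreeGE R α (m + 1)
  iseqv :=
    { refl p := by simp only [sub_self, zero_mem]
      symm h := by rw [← neg_sub]; exact neg_mem h
      trans h₁ h₂ := by rw [← sub_add_sub_cancel]; exact add_mem h₁ h₂ }
  mul' {a b c d} h₁ h₂ := by
    have e : a * c - b * d = a * (c - d) + (a - b) * d := by noncomm_ring
    rw [e]
    exact add_mem (mul_mem_degreeGE_left a h₂) (mul_mem_degreeGE_right h₁ d)
  add' {a b c d} h₁ h₂ := by
    rw [add_sub_add_comm]
    exact add_mem h₁ h₂

variable (R α) in
/-- Keeps the degrees `≤ m`. -/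
abbrev Truncated (m : ℕ) := (truncCon R α m).Quotient

variable (R α) in
noncomputable def truncate (m : ℕ) : NCPoly R α →ₐ[R] Truncated R α m := (truncCon R α m).mkₐ R

variable {m : ℕ}

lemma truncate_surjective : Function.Surjective (truncate R α m) :=
  RingCon.mkₐ_surjective (α := R) _

lemma truncate_eq_truncate_iff {p q : NCPoly R α} :
    truncate R α m p = truncate R α m q ↔ p - q ∈ degreeGE R α (m + 1) :=
  RingCon.eq _

lemma truncate_eq_zero {p : NCPoly R α} (hp : p ∈ degreeGE R α (m + 1)) :
    truncate R α m p = 0 := by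
  rw [← map_zero (truncate R α m), truncate_eq_truncate_iff, sub_zero]
  exact hp

variable (R α m) in
noncomputable def truncDegreeGE (j : ℕ) : Submodule R (Truncated R α m) :=
  (degreeGE R α j).map (truncate R α m).toLinearMap

lemma mem_truncDegreeGE {j : ℕ} {z : Truncated R α m} :
    z ∈ truncDegreeGE R α m j ↔ ∃ p ∈ degreeGE R α j, truncate R α m p = z :=
  Submodule.mem_map

lemma truncate_mem_truncDegreeGE {j : ℕ} {p : NCPoly R α} (hp : p ∈ degreeGE R α j) :
    truncate R α m p ∈ truncDegreeGE R α m j :=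
  mem_truncDegreeGE.2 ⟨p, hp, rfl⟩

lemma mul_mem_truncDegreeGE {a b : ℕ} {z w : Truncated R α m} (hz : z ∈ truncDegreeGE R α m a)
    (hw : w ∈ truncDegreeGE R α m b) : z * w ∈ truncDegreeGE R α m (a + b) := by
  obtain ⟨p, hp, rfl⟩ := mem_truncDegreeGE.1 hz
  obtain ⟨q, hq, rfl⟩ := mem_truncDegreeGE.1 hw
  rw [← map_mul]
  exact truncate_mem_truncDegreeGE (mul_mem_degreeGE hp hq)

lemma mem_truncDegreeGE_zero (z : Truncated R α m) : z ∈ truncDegreeGE R α m 0 := by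
  obtain ⟨p, rfl⟩ := truncate_surjective z
  exact truncate_mem_truncDegreeGE (mem_degreeGE_zero p)

lemma mul_mem_truncDegreeGE_right {j : ℕ} {z : Truncated R α m}
    (hz : z ∈ truncDegreeGE R α m j) (w : Truncated R α m) : z * w ∈ truncDegreeGE R α m j := by
  simpa using mul_mem_truncDegreeGE hz (mem_truncDegreeGE_zero w)

lemma truncDegreeGE_anti {a b : ℕ} (h : a ≤ b) :
    truncDegreeGE R α m b ≤ truncDegreeGE R α m a :=
  Submodule.map_mono (degreeGE_anti h)

lemma truncDegreeGE_eq_bot {j : ℕ} (h : m < j) : truncDegreeGE R α m j = ⊥ := by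
  refine eq_bot_iff.2 fun z hz => ?_
  obtain ⟨p, hp, rfl⟩ := mem_truncDegreeGE.1 hz
  exact truncate_eq_zero (degreeGE_anti h hp)

variable (R α m) in
noncomputable def topComponent : Truncated R α m →ₗ[R] NCPoly R α where
  toFun := Quotient.lift (homComponent R α m) fun p q (h : p - q ∈ degreeGE R α (m + 1)) =>
    sub_eq_zero.1 (by rw [← map_sub]; exact homComponent_eq_zero h (Nat.lt_succ_self m))
  map_add' z w := by
    obtain ⟨p, rfl⟩ := truncate_surjective z
    obtain ⟨q, rfl⟩ := truncate_surjective w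
    rw [← map_add]
    exact map_add _ p q
  map_smul' r z := by
    obtain ⟨p, rfl⟩ := truncate_surjective z
    rw [← map_smul]
    exact map_smul _ r p

def HasLeadingTerm (j : ℕ) (z : Truncated R α m) (t : NCPoly R α) : Prop :=
  ∃ p ∈ degreeGE R α j, truncate R α m p = z ∧ homComponent R α j p = t

lemma HasLeadingTerm.mem_truncDegreeGE {j : ℕ} {z : Truncated R α m} {t : NCPoly R α}
    (h : HasLeadingTerm j z t) : z ∈ truncDegreeGE R α m j :=
  let ⟨p, hp, hpz, _⟩ := h; NCPoly.mem_truncDegreeGE.2 ⟨p, hp, hpz⟩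

lemma HasLeadingTerm.topComponent_eq {z : Truncated R α m} {t : NCPoly R α}
    (h : HasLeadingTerm m z t) : topComponent R α m z = t := by
  obtain ⟨p, -, rfl, rfl⟩ := h
  rfl

lemma hasLeadingTerm_truncate {j : ℕ} {p : NCPoly R α} (hp : p ∈ homogeneous R α j) :
    HasLeadingTerm j (truncate R α m p) p :=
  ⟨p, homogeneous_le_degreeGE j hp, rfl, homComponent_eq_self hp⟩

end Truncation

section Units

variable {m : ℕ}

variable (R α m) in
noncomputable def unitsDegreeGE (j : ℕ) : Subgroup (Truncated R α m)ˣ where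
  carrier := {u | (u : Truncated R α m) - 1 ∈ truncDegreeGE R α m j}
  one_mem' := by simp
  mul_mem' {u v} hu hv := by
    change _ ∈ truncDegreeGE R α m j
    rw [Units.val_mul, mul_sub_one_eq]
    exact add_mem (add_mem (mul_mem_truncDegreeGE_right hu _) hu) hv
  inv_mem' {u} hu := by
    have e : ((u⁻¹ : (Truncated R α m)ˣ) : Truncated R α m) - 1 = -((u - 1) * ↑u⁻¹) := by
      rw [sub_mul, one_mul, Units.mul_inv]; abel
    change _ ∈ truncDegreeGE R α m j
    rw [e]
    exact neg_mem (mul_mem_truncDegreeGE_right hu _)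

lemma mem_unitsDegreeGE {j : ℕ} {u : (Truncated R α m)ˣ} :
    u ∈ unitsDegreeGE R α m j ↔ (u : Truncated R α m) - 1 ∈ truncDegreeGE R α m j := Iff.rfl

lemma unitsDegreeGE_anti {a b : ℕ} (h : a ≤ b) :
    unitsDegreeGE R α m b ≤ unitsDegreeGE R α m a :=
  fun _ hu => truncDegreeGE_anti h hu

lemma unitsDegreeGE_eq_bot {j : ℕ} (h : m < j) : unitsDegreeGE R α m j = ⊥ := by
  refine eq_bot_iff.2 fun u hu => ?_
  rw [mem_unitsDegreeGE, truncDegreeGE_eq_bot h, Submodule.mem_bot, sub_eq_zero] at hu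
  exact Subgroup.mem_bot.2 (Units.ext hu)

lemma sub_one_mul_sub_one_eq_zero {a b : ℕ} {u v : (Truncated R α m)ˣ}
    (hu : u ∈ unitsDegreeGE R α m a) (hv : v ∈ unitsDegreeGE R α m b) (h : m < a + b) :
    ((u : Truncated R α m) - 1) * (v - 1) = 0 := by
  simpa [truncDegreeGE_eq_bot h] using mul_mem_truncDegreeGE hu hv

lemma val_mul_sub_one {a b : ℕ} {u v : (Truncated R α m)ˣ}
    (hu : u ∈ unitsDegreeGE R α m a) (hv : v ∈ unitsDegreeGE R α m b) (h : m < a + b) :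
    ((u * v : (Truncated R α m)ˣ) : Truncated R α m) - 1 = (u - 1) + (v - 1) := by
  rw [Units.val_mul, mul_sub_one_eq, sub_one_mul_sub_one_eq_zero hu hv h, zero_add]

lemma commute_of_mem_unitsDegreeGE {a b : ℕ} {u v : (Truncated R α m)ˣ}
    (hu : u ∈ unitsDegreeGE R α m a) (hv : v ∈ unitsDegreeGE R α m b) (h : m < a + b) :
    Commute u v := by
  refine Units.ext (commute_of_sub_one_mul_sub_one ?_)
  rw [sub_one_mul_sub_one_eq_zero hu hv h, sub_one_mul_sub_one_eq_zero hv hu (by omega)]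

lemma HasLeadingTerm.zero (j : ℕ) : HasLeadingTerm j (0 : Truncated R α m) 0 :=
  ⟨0, zero_mem _, map_zero _, map_zero _⟩

lemma HasLeadingTerm.mem_unitsDegreeGE {j : ℕ} {u : (Truncated R α m)ˣ} {t : NCPoly R α}
    (h : HasLeadingTerm j ((u : Truncated R α m) - 1) t) : u ∈ unitsDegreeGE R α m j :=
  h.mem_truncDegreeGE

lemma HasLeadingTerm.units_mul {j : ℕ} (hj : 1 ≤ j) {u v : (Truncated R α m)ˣ}
    {a b : NCPoly R α} (hu : HasLeadingTerm j ((u : Truncated R α m) - 1) a)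
    (hv : HasLeadingTerm j ((v : Truncated R α m) - 1) b) :
    HasLeadingTerm j (((u * v : (Truncated R α m)ˣ) : Truncated R α m) - 1) (a + b) := by
  obtain ⟨p, hp, hpu, rfl⟩ := hu
  obtain ⟨q, hq, hqv, rfl⟩ := hv
  have hpq : p * q ∈ degreeGE R α (j + j) := mul_mem_degreeGE hp hq
  refine ⟨p * q + (p + q), add_mem (degreeGE_anti (by omega) hpq) (add_mem hp hq), ?_, ?_⟩
  · rw [map_add, map_add, map_mul, hpu, hqv, Units.val_mul, mul_sub_one_eq, add_assoc]
  · rw [map_add, map_add, homComponent_eq_zero hpq (by omega), zero_add]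

lemma HasLeadingTerm.units_inv {j : ℕ} (hj : 1 ≤ j) {u : (Truncated R α m)ˣ} {a : NCPoly R α}
    (hu : HasLeadingTerm j ((u : Truncated R α m) - 1) a) :
    HasLeadingTerm j (((u⁻¹ : (Truncated R α m)ˣ) : Truncated R α m) - 1) (-a) := by
  obtain ⟨q, hq, hqu⟩ :=
    NCPoly.mem_truncDegreeGE.1 ((unitsDegreeGE R α m j).inv_mem hu.mem_unitsDegreeGE)
  obtain ⟨p, hp, hpu, rfl⟩ := hu
  have hpq : p * q ∈ degreeGE R α (j + j) := mul_mem_degreeGE hp hq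
  refine ⟨-p - p * q, sub_mem (neg_mem hp) (degreeGE_anti (by omega) hpq), ?_, ?_⟩
  · rw [map_sub, map_neg, map_mul, hpu, hqu, mul_sub, mul_one, sub_mul, Units.mul_inv, one_mul]
    abel
  · rw [map_sub, map_neg, homComponent_eq_zero hpq (by omega), sub_zero]

lemma HasLeadingTerm.units_commutator {i j : ℕ} (hi : 1 ≤ i) (hj : 1 ≤ j)
    {u v : (Truncated R α m)ˣ} {a b : NCPoly R α}
    (hu : HasLeadingTerm i ((u : Truncated R α m) - 1) a)
    (hv : HasLeadingTerm j ((v : Truncated R α m) - 1) b) :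
    HasLeadingTerm (i + j) (((⁅u, v⁆ : (Truncated R α m)ˣ) : Truncated R α m) - 1)
      (a * b - b * a) := by
  have hw : u⁻¹ * v⁻¹ ∈ unitsDegreeGE R α m 1 :=
    mul_mem (inv_mem (unitsDegreeGE_anti hi hu.mem_unitsDegreeGE))
      (inv_mem (unitsDegreeGE_anti hj hv.mem_unitsDegreeGE))
  obtain ⟨s, hs, hsw⟩ := NCPoly.mem_truncDegreeGE.1 hw
  obtain ⟨p, hp, hpu, rfl⟩ := hu
  obtain ⟨q, hq, hqv, rfl⟩ := hv
  have hqp := mul_mem_degreeGE hq hp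
  rw [add_comm] at hqp
  have hc : p * q - q * p ∈ degreeGE R α (i + j) := sub_mem (mul_mem_degreeGE hp hq) hqp
  refine ⟨(p * q - q * p) * (1 + s), mul_mem_degreeGE_right hc _, ?_, ?_⟩
  · rw [map_mul, map_sub, map_mul, map_mul, map_add, map_one, hpu, hqv, hsw, add_sub_cancel,
      commutatorElement_def, Units.val_mul, Units.val_mul, Units.val_mul, Units.val_mul,
      mul_mul_mul_sub_one_eq u.mul_inv v.mul_inv]
  · rw [mul_one_add, map_add, homComponent_eq_zero (mul_mem_degreeGE hc hs) (by omega), add_zero,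
      map_sub, homComponent_mul hp hq, add_comm i j, homComponent_mul hq hp]

end Units

section LeadingUnits

variable {m : ℕ}

variable (m) in
noncomputable def leadingUnits (V : Submodule R (NCPoly R α)) (j : ℕ) :
    Subgroup (Truncated R α m)ˣ where
  carrier := {u | ∃ t ∈ V ^ (j + 1), HasLeadingTerm (j + 1) ((u : Truncated R α m) - 1) t}
  one_mem' := ⟨0, zero_mem _, by simpa using HasLeadingTerm.zero (j + 1)⟩
  mul_mem' := fun ⟨a, ha, hu⟩ ⟨b, hb, hv⟩ => ⟨a + b, add_mem ha hb, hu.units_mul (by omega) hv⟩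
  inv_mem' := fun ⟨a, ha, hu⟩ => ⟨-a, neg_mem ha, hu.units_inv (by omega)⟩

lemma leadingUnits_le_unitsDegreeGE (V : Submodule R (NCPoly R α)) (j : ℕ) :
    leadingUnits m V j ≤ unitsDegreeGE R α m (j + 1) :=
  fun _ ⟨_, _, hu⟩ => hu.mem_unitsDegreeGE

theorem map_lowerCentralSeries_le_leadingUnits {G : Type*} [Group G]
    (ν : G →* (Truncated R α m)ˣ) {V : Submodule R (NCPoly R α)}
    (hν : ∀ g, ν g ∈ leadingUnits m V 0) (j : ℕ) :
    ((⊤ : Subgroup G).lowerCentralSeries j).map ν ≤ leadingUnits m V j := by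
  induction j with
  | zero => exact Subgroup.map_le_iff_le_comap.2 fun g _ => hν g
  | succ j ih =>
    rw [Subgroup.map_le_iff_le_comap, Subgroup.lowerCentralSeries_succ, Subgroup.commutator_le]
    intro g hg h _
    obtain ⟨a, ha, hga⟩ := ih (Subgroup.mem_map_of_mem ν hg)
    obtain ⟨b, hb, hhb⟩ := hν h
    refine ⟨a * b - b * a, sub_mem ?_ ?_, ?_⟩
    · rw [pow_succ]
      exact Submodule.mul_mem_mul ha (by simpa using hb)
    · rw [pow_succ']
      exact Submodule.mul_mem_mul (by simpa using hb) ha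
    · rw [map_commutatorElement]
      exact hga.units_commutator (by omega) le_rfl hhb

end LeadingUnits

section Magnus

variable {m : ℕ}

lemma isUnit_one_add_truncate_X (a : α) : IsUnit (1 + truncate R α m (X R a)) :=
  IsNilpotent.isUnit_one_add ⟨m + 1, by
    rw [← map_pow]; exact truncate_eq_zero (pow_mem_degreeGE (X_mem_degreeGE a) _)⟩

variable (R m) in
noncomputable def magnus : FreeGroup α →* (Truncated R α m)ˣ :=
  FreeGroup.lift fun a => (isUnit_one_add_truncate_X a).unit

lemma magnus_of_sub_one (a : α) :
    (magnus R m (FreeGroup.of a) : Truncated R α m) - 1 = truncate R α m (X R a) := by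
  rw [magnus, FreeGroup.lift_apply_of, IsUnit.unit_spec, add_sub_cancel_left]

lemma hasLeadingTerm_magnus_of (a : α) :
    HasLeadingTerm 1 ((magnus R m (FreeGroup.of a) : Truncated R α m) - 1) (X R a) :=
  magnus_of_sub_one (R := R) (m := m) a ▸ hasLeadingTerm_truncate (X_mem_homogeneous a)

variable (R) in
noncomputable def linearTerm : FreeGroup α →* Multiplicative (NCPoly R α) :=
  FreeGroup.lift fun a => Multiplicative.ofAdd (X R a)

lemma linearTerm_of (a : α) : (linearTerm R (FreeGroup.of a)).toAdd = X R a := by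
  rw [linearTerm, FreeGroup.lift_apply_of, toAdd_ofAdd]

lemma hasLeadingTerm_magnus (g : FreeGroup α) :
    HasLeadingTerm 1 ((magnus R m g : Truncated R α m) - 1) (linearTerm R g).toAdd := by
  induction g using FreeGroup.induction_on with
  | C1 => simpa using HasLeadingTerm.zero 1
  | of a => exact linearTerm_of (R := R) a ▸ hasLeadingTerm_magnus_of a
  | inv_of a h => simpa using h.units_inv le_rfl
  | mul g h hg hh => simpa using hg.units_mul le_rfl hh

lemma magnus_mem_unitsDegreeGE {j : ℕ} {g : FreeGroup α}
    (hg : g ∈ (⊤ : Subgroup (FreeGroup α)).lowerCentralSeries j) :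
    magnus R m g ∈ unitsDegreeGE R α m (j + 1) :=
  leadingUnits_le_unitsDegreeGE ⊤ j <| map_lowerCentralSeries_le_leadingUnits (magnus R m)
    (fun g => ⟨_, by simp, hasLeadingTerm_magnus g⟩) j (Subgroup.mem_map_of_mem _ hg)

lemma magnus_eq_one {g : FreeGroup α}
    (hg : g ∈ (⊤ : Subgroup (FreeGroup α)).lowerCentralSeries m) : magnus R m g = 1 := by
  have h := magnus_mem_unitsDegreeGE (R := R) (m := m) hg
  rwa [unitsDegreeGE_eq_bot (Nat.lt_succ_self m), Subgroup.mem_bot] at h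

lemma hasLeadingTerm_magnus_iteratedBracket (a : α) (l : List α) :
    HasLeadingTerm (l.length + 1)
      ((magnus R m (iteratedBracket (FreeGroup.of a) (l.map FreeGroup.of)) : Truncated R α m) - 1)
      (iteratedBracket (X R a) (l.map (X R))) := by
  induction l using List.reverseRecOn with
  | nil => exact hasLeadingTerm_magnus_of a
  | append_singleton l b ih =>
    simp only [List.map_append, List.map_singleton, iteratedBracket_append_singleton,
      map_commutatorElement, List.length_append, List.length_singleton, Ring.lie_def]
    exact ih.units_commutator (by omega) le_rfl (hasLeadingTerm_magnus_of b)

end Magnus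

section Johnson

variable {k : ℕ}

variable (R) in
/-- For `φ ∈ IA(k)`, the Johnson homomorphism `τ_k(φ)` at `g`, read through the Magnus expansion
in the top degree `k + 1`. -/
noncomputable def johnson (k : ℕ) (φ : MulAut (FreeGroup α)) (g : FreeGroup α) :
    Truncated R α (k + 1) :=
  (magnus R (k + 1) (φ g * g⁻¹) : Truncated R α (k + 1)) - 1

lemma magnus_mem_unitsDegreeGE_one (g : FreeGroup α) : magnus R k g ∈ unitsDegreeGE R α k 1 :=
  magnus_mem_unitsDegreeGE (j := 0) (Subgroup.mem_top g)

lemma johnson_apply_mul {φ : MulAut (FreeGroup α)}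
    (hφ : ∀ x, φ x * x⁻¹ ∈ (⊤ : Subgroup (FreeGroup α)).lowerCentralSeries k) (g h : FreeGroup α) :
    johnson R k φ (g * h) = johnson R k φ g + johnson R k φ h := by
  have e : φ (g * h) * (g * h)⁻¹ = (φ g * g⁻¹) * (g * (φ h * h⁻¹) * g⁻¹) := by
    rw [map_mul]; group
  have hconj : magnus R (k + 1) (g * (φ h * h⁻¹) * g⁻¹) = magnus R (k + 1) (φ h * h⁻¹) := by
    rw [map_mul, map_mul, map_inv]
    exact (commute_of_mem_unitsDegreeGE (magnus_mem_unitsDegreeGE_one g)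
      (magnus_mem_unitsDegreeGE (hφ h)) (by omega)).mul_inv_cancel
  rw [johnson, e, map_mul, hconj, val_mul_sub_one (magnus_mem_unitsDegreeGE (hφ g))
    (magnus_mem_unitsDegreeGE (hφ h)) (by omega)]
  rfl

lemma johnson_mul (hk : 1 ≤ k) {φ ψ : MulAut (FreeGroup α)}
    (hφ : ∀ x, φ x * x⁻¹ ∈ (⊤ : Subgroup (FreeGroup α)).lowerCentralSeries k)
    (hψ : ∀ x, ψ x * x⁻¹ ∈ (⊤ : Subgroup (FreeGroup α)).lowerCentralSeries k) (g : FreeGroup α) :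
    johnson R k (φ * ψ) g = johnson R k φ g + johnson R k ψ g := by
  set u := ψ g * g⁻¹
  have e : (φ * ψ) g * g⁻¹ = (φ u * u⁻¹) * u * (φ g * g⁻¹) := by
    simp only [MulAut.mul_apply, u, map_mul, map_inv]; group
  have hφu : magnus R (k + 1) (φ u * u⁻¹) = 1 :=
    magnus_eq_one (mul_inv_mem_lowerCentralSeries_succ φ.toMonoidHom hk hφ le_rfl (hψ g))
  rw [johnson, e, map_mul, map_mul, hφu, one_mul,
    val_mul_sub_one (magnus_mem_unitsDegreeGE (hψ g)) (magnus_mem_unitsDegreeGE (hφ g)) (by omega)]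
  exact add_comm _ _

lemma johnson_one (g : FreeGroup α) : johnson R k 1 g = 0 := by
  rw [johnson, MulAut.one_apply, mul_inv_cancel, map_one, Units.val_one, sub_self]

lemma johnson_inv (hk : 1 ≤ k) {φ : MulAut (FreeGroup α)}
    (hφ : ∀ x, φ x * x⁻¹ ∈ (⊤ : Subgroup (FreeGroup α)).lowerCentralSeries k) (g : FreeGroup α) :
    johnson R k φ⁻¹ g = -johnson R k φ g := by
  have hφ' : ∀ x, φ⁻¹ x * x⁻¹ ∈ (⊤ : Subgroup (FreeGroup α)).lowerCentralSeries k := by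
    intro x
    simpa using inv_mem (hφ (φ⁻¹ x))
  refine eq_neg_of_add_eq_zero_left ?_
  rw [← johnson_mul hk hφ' hφ, inv_mul_cancel, johnson_one]

lemma map_johnson_eq_zero_of_mem_closure {M : Type*} [AddCommGroup M] [Module R M] {n : ℕ}
    (hk : 1 ≤ k) (f : Truncated R (Fin n) (k + 1) →ₗ[R] M) (g : FreeGroup (Fin n))
    {s : Set (MulAut (FreeGroup (Fin n)))} (hs : ∀ φ ∈ s, φ ∈ IAF n k ∧ f (johnson R k φ g) = 0)
    {φ : MulAut (FreeGroup (Fin n))} (hφ : φ ∈ Subgroup.closure s) : f (johnson R k φ g) = 0 := by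
  suffices φ ∈ IAF n k ∧ f (johnson R k φ g) = 0 from this.2
  induction hφ using Subgroup.closure_induction with
  | mem φ hφ => exact hs φ hφ
  | one => exact ⟨one_mem _, by rw [johnson_one, map_zero]⟩
  | mul φ ψ _ _ hφ hψ =>
    exact ⟨mul_mem hφ.1 hψ.1, by rw [johnson_mul hk hφ.1 hψ.1, map_add, hφ.2, hψ.2, add_zero]⟩
  | inv φ _ hφ => exact ⟨inv_mem hφ.1, by rw [johnson_inv hk hφ.1, map_neg, hφ.2, neg_zero]⟩

end Johnson

section LeftDeriv

lemma prod_map_X (l : List α) : (l.map (X R)).prod = single (FreeMonoid.ofList l) 1 := by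
  induction l with
  | nil => rfl
  | cons a l ih => rw [List.map_cons, List.prod_cons, ih, X, single_mul_single, one_mul]; rfl

lemma coeff_X_of [DecidableEq α] (a b : α) :
    (X R a).coeff (FreeMonoid.of b) = if a = b then 1 else 0 := by
  classical
  rw [X, coeff_single, Finsupp.single_apply]
  exact if_congr FreeMonoid.of_injective.eq_iff rfl rfl

lemma single_of_mul (a : α) (w : FreeMonoid α) (r : R) :
    single (FreeMonoid.of a * w) r = X R a * single w r := by
  rw [X, single_mul_single, one_mul]

variable (R) in
noncomputable def leftDeriv (z : α) : NCPoly R α →ₗ[R] NCPoly R α :=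
  (coeffLinearEquiv R).symm.toLinearMap ∘ₗ
    Finsupp.lcomapDomain (FreeMonoid.of z * ·) (mul_right_injective _) ∘ₗ
    (coeffLinearEquiv R).toLinearMap

lemma coeff_leftDeriv (z : α) (p : NCPoly R α) (u : FreeMonoid α) :
    (leftDeriv R z p).coeff u = p.coeff (FreeMonoid.of z * u) := rfl

lemma leftDeriv_single_one (z : α) (r : R) : leftDeriv R z (single 1 r) = 0 := by
  ext u
  refine Finsupp.single_eq_of_ne fun h => ?_
  have := congrArg FreeMonoid.length h
  rw [FreeMonoid.length_mul, FreeMonoid.length_of, FreeMonoid.length_one] at this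
  omega

lemma leftDeriv_X_mul [DecidableEq α] (z a : α) (y : NCPoly R α) :
    leftDeriv R z (X R a * y) = if a = z then y else 0 := by
  ext u
  rw [coeff_leftDeriv]
  split_ifs with ha
  · rw [ha, X, coeff_single_mul_mul, one_mul]
  · rw [X, coeff_single_mul_of_forall_mul_ne]
    · rfl
    · intro d h
      have := congrArg FreeMonoid.toList h
      simp only [FreeMonoid.toList_of_mul, List.cons.injEq] at this
      exact ha this.1

lemma leftDeriv_mul_X [DecidableEq α] {z b : α} (hb : b ≠ z) (p : NCPoly R α) :
    leftDeriv R z (p * X R b) = leftDeriv R z p * X R b := by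
  induction p using MonoidAlgebra.induction_linear with
  | zero => simp
  | add p q hp hq => rw [add_mul, map_add, map_add, hp, hq, add_mul]
  | single w r =>
    cases w with
    | one =>
      rw [show single 1 r * X R b = X R b * single 1 r by
          rw [X, single_mul_single, single_mul_single, one_mul, mul_one, mul_one, one_mul],
        leftDeriv_X_mul, if_neg hb, leftDeriv_single_one, zero_mul]
    | of_mul a w =>
      rw [single_of_mul, mul_assoc, leftDeriv_X_mul, leftDeriv_X_mul]
      split_ifs <;> simp

lemma leftDeriv_mul_of_mem_homogeneous_one [DecidableEq α] (z : α) {v : NCPoly R α}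
    (hv : v ∈ homogeneous R α 1) (y : NCPoly R α) :
    leftDeriv R z (v * y) = v.coeff (FreeMonoid.of z) • y := by
  have hv' := homogeneous_one_le_span_X hv
  clear hv
  induction hv' using Submodule.span_induction with
  | mem v hv =>
    obtain ⟨a, rfl⟩ := hv
    rw [leftDeriv_X_mul, coeff_X_of]
    split_ifs <;> simp
  | zero => simp
  | add v w _ _ hv hw => rw [add_mul, map_add, hv, hw, coeff_add, Finsupp.add_apply, add_smul]
  | smul r v _ hv => rw [smul_mul_assoc, map_smul, hv, coeff_smul, Finsupp.smul_apply, smul_assoc]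

lemma leftDeriv_iteratedBracket [DecidableEq α] {z : α} {l : List α} (hz : z ∉ l) :
    leftDeriv R z (iteratedBracket (X R z) (l.map (X R))) = (l.map (X R)).prod := by
  induction l using List.reverseRecOn with
  | nil => simpa [iteratedBracket] using leftDeriv_X_mul (R := R) z z 1
  | append_singleton l b ih =>
    have hb : b ≠ z := fun h => hz (by simp [h])
    rw [List.map_append, List.map_singleton, iteratedBracket_append_singleton, Ring.lie_def,
      map_sub, leftDeriv_mul_X hb, leftDeriv_X_mul, if_neg hb, sub_zero,
      ih (fun h => hz (List.mem_append_left _ h)), List.prod_append, List.prod_singleton]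

end LeftDeriv

section DetFunctional

variable {k : ℕ}

variable (R) in
noncomputable def letterCoeffs (d : Fin k → α) : NCPoly R α →ₗ[R] Fin k → R :=
  LinearMap.pi fun j => Finsupp.lapply (FreeMonoid.of (d j)) ∘ₗ (coeffLinearEquiv R).toLinearMap

lemma letterCoeffs_apply (d : Fin k → α) (p : NCPoly R α) (j : Fin k) :
    letterCoeffs R d p j = p.coeff (FreeMonoid.of (d j)) := rfl

variable [DecidableEq α]

variable (R) in
noncomputable def detFunctional (d : Fin k → α) : NCPoly R α →ₗ[R] R :=
  Finsupp.linearCombination R (fun u : FreeMonoid α =>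
    (Matrix.of fun i j : Fin k => if u.toList[(i : ℕ)]? = some (d j) then (1 : R) else 0).det) ∘ₗ
    (coeffLinearEquiv R).toLinearMap

lemma detFunctional_prod_X (d : Fin k → α) (r : Fin k → α) :
    detFunctional R d (List.ofFn fun i => X R (r i)).prod
      = (Matrix.of fun i => letterCoeffs R d (X R (r i))).det := by
  change detFunctional R d (List.ofFn (X R ∘ r)).prod = _
  rw [← List.map_ofFn, prod_map_X, detFunctional, LinearMap.comp_apply]
  simp only [LinearEquiv.coe_coe, coeffLinearEquiv_apply, coeff_single,
    Finsupp.linearCombination_single, FreeMonoid.toList_ofList, List.length_ofFn, Fin.is_lt,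
    getElem?_pos, List.getElem_ofFn, Fin.eta, Option.some.injEq, smul_eq_mul, one_mul]
  congr 1
  ext i j
  simp only [Matrix.of_apply, letterCoeffs_apply, coeff_X_of]

lemma detFunctional_prod (d : Fin k → α) (v : Fin k → NCPoly R α)
    (hv : ∀ i, v i ∈ homogeneous R α 1) :
    detFunctional R d (List.ofFn v).prod = (Matrix.of fun i => letterCoeffs R d (v i)).det := by
  let L := Finsupp.linearCombination R (X R (α := α))
  have key : ((detFunctional R d).compMultilinearMap
        (MultilinearMap.mkPiAlgebraFin R k (NCPoly R α))).compLinearMap (fun _ => L)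
      = (Matrix.detRowAlternating (R := R) (n := Fin k)).toMultilinearMap.compLinearMap
        (fun _ => letterCoeffs R d ∘ₗ L) := by
    refine Module.Basis.ext_multilinear (fun _ => Finsupp.basisSingleOne) fun r => ?_
    simp only [L, Finsupp.coe_basisSingleOne, MultilinearMap.compLinearMap_apply,
      Finsupp.linearCombination_single, one_smul, LinearMap.compMultilinearMap_apply,
      MultilinearMap.mkPiAlgebraFin_apply, LinearMap.coe_comp, Function.comp_apply,
      AlternatingMap.coe_multilinearMap]
    exact detFunctional_prod_X d r
  choose c hc using fun i => (Finsupp.range_linearCombination (R := R) (v := X R (α := α)) ▸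
    homogeneous_one_le_span_X (hv i) : v i ∈ LinearMap.range L)
  have := congrArg (· c) key
  simp only [L, MultilinearMap.compLinearMap_apply, hc, LinearMap.compMultilinearMap_apply,
    MultilinearMap.mkPiAlgebraFin_apply, LinearMap.coe_comp, Function.comp_apply,
    AlternatingMap.coe_multilinearMap] at this
  exact this

variable (R) in
noncomputable def leadFunctional (z : α) (d : Fin k → α) : NCPoly R α →ₗ[R] R :=
  detFunctional R d ∘ₗ leftDeriv R z

lemma leadFunctional_iteratedBracket {z : α} {d : Fin k → α} (hd : Function.Injective d)
    (hz : z ∉ Set.range d) :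
    leadFunctional R z d (iteratedBracket (X R z) ((List.ofFn d).map (X R))) = 1 := by
  rw [leadFunctional, LinearMap.comp_apply, leftDeriv_iteratedBracket (by rwa [List.mem_ofFn]),
    List.map_ofFn, detFunctional_prod d (X R ∘ d) fun i => X_mem_homogeneous _,
    ← Matrix.det_one (n := Fin k)]
  congr 1
  ext i j
  simp only [Matrix.of_apply, Function.comp_apply, letterCoeffs_apply, coeff_X_of,
    Matrix.one_apply, hd.eq_iff]

section Field

variable {K : Type*} [Field K]

lemma detFunctional_eq_zero_of_mem_pow (d : Fin k → α) {V : Submodule K (NCPoly K α)}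
    [FiniteDimensional K V] (hV : V ≤ homogeneous K α 1) (hrank : Module.finrank K V < k)
    {y : NCPoly K α} (hy : y ∈ V ^ k) : detFunctional K d y = 0 := by
  rw [Submodule.pow_eq_span_pow_set] at hy
  induction hy using Submodule.span_induction with
  | mem y hy =>
    obtain ⟨f, rfl⟩ := Set.mem_pow.1 hy
    rw [detFunctional_prod d _ fun i => hV (f i).2]
    refine Matrix.det_eq_zero_of_not_linearIndependent_rows fun hli => hrank.not_ge ?_
    simpa using
      (LinearIndependent.of_comp (letterCoeffs K d ∘ₗ V.subtype) hli).fintype_card_le_finrank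
  | zero => exact map_zero _
  | add y₁ y₂ _ _ h₁ h₂ => rw [map_add, h₁, h₂, add_zero]
  | smul r y _ h => rw [map_smul, h, smul_zero]

lemma leadFunctional_eq_zero_of_mem_pow (z : α) (d : Fin k → α) {V : Submodule K (NCPoly K α)}
    [FiniteDimensional K V] (hV : V ≤ homogeneous K α 1) (hrank : Module.finrank K V < k)
    {y : NCPoly K α} (hy : y ∈ V ^ (k + 1)) : leadFunctional K z d y = 0 := by
  rw [pow_succ'] at hy
  induction hy using Submodule.mul_induction_on' with
  | mem_mul_mem v hv w hw =>
    rw [leadFunctional, LinearMap.comp_apply, leftDeriv_mul_of_mem_homogeneous_one z (hV hv),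
      map_smul, detFunctional_eq_zero_of_mem_pow d hV hrank hw, smul_zero]
  | add y₁ _ y₂ _ h₁ h₂ => rw [map_add, h₁, h₂, add_zero]

end Field

end DetFunctional

section Supported

variable {k : ℕ}

lemma linearTerm_mem_homogeneous (g : FreeGroup α) :
    (linearTerm R g).toAdd ∈ homogeneous R α 1 := by
  induction g using FreeGroup.induction_on with
  | C1 => exact zero_mem _
  | of a => exact linearTerm_of (R := R) a ▸ X_mem_homogeneous a
  | inv_of a h => simpa using neg_mem h
  | mul g h hg hh => simpa using add_mem hg hh

lemma linearTerm_mem_span_of_mem_closure {S : Set (FreeGroup α)} {g : FreeGroup α}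
    (hg : g ∈ Subgroup.closure S) :
    (linearTerm R g).toAdd ∈ Submodule.span R ((fun s => (linearTerm R s).toAdd) '' S) := by
  induction hg using Subgroup.closure_induction with
  | mem s hs => exact Submodule.subset_span ⟨s, hs, rfl⟩
  | one => simp
  | mul g h _ _ hg hh => simpa using add_mem hg hh
  | inv g _ hg => simpa using neg_mem hg

variable (R) in
noncomputable def johnsonHom {φ : MulAut (FreeGroup α)}
    (hφ : ∀ x, φ x * x⁻¹ ∈ (⊤ : Subgroup (FreeGroup α)).lowerCentralSeries k) :
    FreeGroup α →* Multiplicative (Truncated R α (k + 1)) :=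
  MonoidHom.mk' (fun g => Multiplicative.ofAdd (johnson R k φ g)) (johnson_apply_mul hφ)

variable {K : Type*} [Field K] [DecidableEq α]

/-- On `B`, `johnson` vanishes; on `A`, it factors through the retraction onto `A`, so its top
components lie in `V ^ (k + 1)` for the span `V` of the linear terms of the `< k` generators. -/
theorem leadFunctional_johnson_eq_zero {φ : MulAut (FreeGroup α)}
    (hφ : ∀ x, φ x * x⁻¹ ∈ (⊤ : Subgroup (FreeGroup α)).lowerCentralSeries k)
    {A B : Subgroup (FreeGroup α)} (hAB : IsFreeProductPair A B) (hsupp : SupportedOn φ A B)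
    {S : Finset (FreeGroup α)} (hS : S.card < k) (hSA : Subgroup.closure (S : Set _) = A)
    (z : α) (d : Fin k → α) (g : FreeGroup α) :
    leadFunctional K z d (topComponent K α (k + 1) (johnson K k φ g)) = 0 := by
  classical
  set V := Submodule.span K (S.image fun s => (linearTerm K s).toAdd : Set (NCPoly K α))
  have hVhom : V ≤ homogeneous K α 1 :=
    Submodule.span_le.2 <| by
      rw [Finset.coe_image]; exact Set.image_subset_iff.2 fun s _ => linearTerm_mem_homogeneous s
  have hrank : Module.finrank K V < k :=
    (finrank_span_finset_le_card _).trans_lt (Finset.card_image_le.trans_lt hS)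
  let ν := (magnus K (k + 1)).comp (A.subtype.comp hAB.retraction)
  have hν (g : FreeGroup α) : ν g ∈ leadingUnits (k + 1) V 0 :=
    ⟨_, by simpa [V] using linearTerm_mem_span_of_mem_closure (hSA ▸ (hAB.retraction g).2),
      hasLeadingTerm_magnus _⟩
  let f := (leadFunctional K z d ∘ₗ topComponent K α (k + 1)).toAddMonoidHom
  suffices A ⊔ B ≤ (f.toMultiplicative.comp (johnsonHom K hφ)).ker by
    exact this (hAB.sup_eq_top ▸ Subgroup.mem_top g)
  refine sup_le (fun a ha => ?_) (fun b hb => ?_)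
  · have hwA : φ a * a⁻¹ ∈ A := mul_mem (hsupp.1 ▸ Subgroup.mem_map_of_mem _ ha) (inv_mem ha)
    obtain ⟨t, ht, hlead⟩ := map_lowerCentralSeries_le_leadingUnits ν hν k
      (Subgroup.mem_map_of_mem ν (hφ a))
    have hνw : ν (φ a * a⁻¹) = magnus K (k + 1) (φ a * a⁻¹) := by
      simp [ν, hAB.retraction_apply_coe ⟨_, hwA⟩]
    rw [hνw] at hlead
    change Multiplicative.ofAdd (leadFunctional K z d (topComponent K α (k + 1)
      ((magnus K (k + 1) (φ a * a⁻¹) : Truncated K α (k + 1)) - 1))) = 1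
    rw [hlead.topComponent_eq, leadFunctional_eq_zero_of_mem_pow z d hVhom hrank ht, ofAdd_zero]
  · have hb : johnson K k φ b = 0 := by
      rw [johnson, hsupp.2 b hb, mul_inv_cancel, map_one, Units.val_one, sub_self]
    change Multiplicative.ofAdd (f (johnson K k φ b)) = 1
    rw [hb, map_zero, ofAdd_zero]

end Supported

section Witness

variable {j : ℕ}

noncomputable def witness (z : α) (d : Fin (j + 1) → α) : MulAut (FreeGroup α) :=
  MulAut.conj (iteratedBracket (FreeGroup.of z)
    ((List.ofFn fun i : Fin j => d i.castSucc).map FreeGroup.of))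

lemma witness_mul_inv (z : α) (d : Fin (j + 1) → α) (x : FreeGroup α) :
    witness z d x * x⁻¹ = ⁅iteratedBracket (FreeGroup.of z)
      ((List.ofFn fun i : Fin j => d i.castSucc).map FreeGroup.of), x⁆ := by
  rw [witness, MulAut.conj_apply, commutatorElement_def]

lemma witness_mul_inv_mem (z : α) (d : Fin (j + 1) → α) (x : FreeGroup α) :
    witness z d x * x⁻¹ ∈ (⊤ : Subgroup (FreeGroup α)).lowerCentralSeries (j + 1) := by
  rw [witness_mul_inv]
  refine Subgroup.commutator_mem_commutator ?_ (Subgroup.mem_top x)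
  simpa using iteratedBracket_mem_lowerCentralSeries (FreeGroup.of z)
    ((List.ofFn fun i : Fin j => d i.castSucc).map FreeGroup.of)

lemma leadFunctional_johnson_witness [DecidableEq α] {z : α}
    {d : Fin (j + 1) → α} (hd : Function.Injective d) (hz : z ∉ Set.range d) :
    leadFunctional R z d (topComponent R α (j + 2)
      (johnson R (j + 1) (witness z d) (FreeGroup.of (d (Fin.last j))))) = 1 := by
  have e : witness z d (FreeGroup.of (d (Fin.last j))) * (FreeGroup.of (d (Fin.last j)))⁻¹
      = iteratedBracket (FreeGroup.of z) ((List.ofFn d).map FreeGroup.of) := by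
    rw [witness_mul_inv, List.ofFn_succ', List.concat_eq_append, List.map_append,
      List.map_singleton, iteratedBracket_append_singleton]
  have h := hasLeadingTerm_magnus_iteratedBracket (R := R) (m := j + 2) z (List.ofFn d)
  rw [List.length_ofFn] at h
  rw [johnson, e, h.topComponent_eq, leadFunctional_iteratedBracket hd hz]

end Witness

end NCPoly

open NCPoly in
/-- **Lower bound on rank.**  For `k ≥ 1` and `n > k`, the group `IA_n(k)` is not generated by
its elements supported on splittings of `F_n` of rank less than `k`: the subgroup generated by
all such elements is a proper subgroup of `IA_n(k)`. -/
theorem stmt1 (k n : ℕ) (hk : 1 ≤ k) (hn : k < n) :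
    Subgroup.closure {φ : MulAut (FreeGroup (Fin n)) |
        φ ∈ IAF n k ∧
        ∃ A B : Subgroup (FreeGroup (Fin n)),
          IsFreeProductPair A B ∧ SupportedOn φ A B ∧
          ∃ S : Finset (FreeGroup (Fin n)), S.card < k ∧ Subgroup.closure (S : Set _) = A}
      < IAF n k := by
  obtain ⟨j, rfl⟩ : ∃ j, k = j + 1 := ⟨k - 1, by omega⟩
  let z : Fin n := ⟨0, by omega⟩
  let d : Fin (j + 1) → Fin n := fun i => ⟨i + 1, by omega⟩
  have hd : Function.Injective d := fun i i' h => Fin.ext (by simpa [d] using congrArg Fin.val h)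
  have hz : z ∉ Set.range d := fun ⟨i, h⟩ => Nat.succ_ne_zero i (congrArg Fin.val h)
  refine lt_of_le_of_ne ((Subgroup.closure_le _).2 fun φ hφ => hφ.1) fun h => ?_
  have hvanish : leadFunctional ℚ z d (topComponent ℚ _ (j + 2)
      (johnson ℚ (j + 1) (witness z d) (FreeGroup.of (d (Fin.last j))))) = 0 := by
    refine map_johnson_eq_zero_of_mem_closure hk (leadFunctional ℚ z d ∘ₗ topComponent ℚ _ _) _ ?_
      (h.ge (witness_mul_inv_mem z d))
    rintro φ ⟨hφ, A, B, hAB, hsupp, S, hS, hSA⟩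
    exact ⟨hφ, leadFunctional_johnson_eq_zero hφ hAB hsupp hS hSA z d _⟩
  exact one_ne_zero ((leadFunctional_johnson_witness hd hz).symm.trans hvanish)
end

section
/- For all n ≥ 1 and all k ≥ 1, the commutator subgroup satisfies [IA_n, IA_n(k)] ⊆ IA_n(k+1); in particular each quotient IA_n(k)/IA_n(k+1) is abelian. -/
open scoped commutatorElement

namespace Subgroup

variable {G : Type*} [Group G]

theorem commutator_commutator_le_of_rotate {H₁ H₂ H₃ N : Subgroup G} [N.Normal]
    (h1 : ⁅⁅H₂, H₃⁆, H₁⁆ ≤ N) (h2 : ⁅⁅H₃, H₁⁆, H₂⁆ ≤ N) : ⁅⁅H₁, H₂⁆, H₃⁆ ≤ N := by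
  have map_eq_bot : ∀ K : Subgroup G, K.map (QuotientGroup.mk' N) = ⊥ ↔ K ≤ N := fun K => by
    rw [map_eq_bot_iff, QuotientGroup.ker_mk']
  simp only [← map_eq_bot, map_commutator] at h1 h2 ⊢
  exact commutator_commutator_eq_bot_of_rotate h1 h2

theorem commutator_lowerCentralSeries_le (i j : ℕ) :
    ⁅(⊤ : Subgroup G).lowerCentralSeries i, (⊤ : Subgroup G).lowerCentralSeries j⁆ ≤
      (⊤ : Subgroup G).lowerCentralSeries (i + j + 1) := by
  induction j generalizing i with
  | zero => exact le_rfl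
  | succ j ih =>
    rw [lowerCentralSeries_succ, commutator_comm]
    apply commutator_commutator_le_of_rotate
    · rw [commutator_comm ⊤, ← lowerCentralSeries_succ]
      exact (ih (i + 1)).trans (lowerCentralSeries_antitone _ (by omega))
    · refine (commutator_mono (ih i) le_rfl).trans ?_
      rw [← lowerCentralSeries_succ]
      exact lowerCentralSeries_antitone _ (by omega)

end Subgroup

section LowerCentralSeries

variable {G : Type*} [Group G]

theorem mul_inv_mem_iff_mk_eq {N : Subgroup G} [N.Normal] {x y : G} :
    x * y⁻¹ ∈ N ↔ (x : G ⧸ N) = y := by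
  rw [QuotientGroup.eq_iff_div_mem, div_eq_mul_inv]

theorem commute_mk_of_commutatorElement_mem {N : Subgroup G} [N.Normal] {x y : G}
    (h : ⁅x, y⁆ ∈ N) : Commute (x : G ⧸ N) y := by
  rw [← commutatorElement_eq_one_iff_commute]
  exact (map_commutatorElement (QuotientGroup.mk' N) x y).symm.trans
    ((QuotientGroup.eq_one_iff _).mpr h)

theorem commute_mk_lowerCentralSeries {i j n : ℕ} (hn : n ≤ i + j + 1) {x y : G}
    (hx : x ∈ (⊤ : Subgroup G).lowerCentralSeries i)
    (hy : y ∈ (⊤ : Subgroup G).lowerCentralSeries j) :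
    Commute (x : G ⧸ (⊤ : Subgroup G).lowerCentralSeries n) y :=
  commute_mk_of_commutatorElement_mem <| Subgroup.lowerCentralSeries_antitone _ hn <|
    Subgroup.commutator_lowerCentralSeries_le i j (Subgroup.commutator_mem_commutator hx hy)

end LowerCentralSeries

section Commutator

variable {K : Type*} [Group K]

theorem commutatorElement_mul_left_of_forall_commute {c : K} (hc : ∀ y, Commute c y) (p q : K) :
    ⁅c * p, q⁆ = ⁅p, q⁆ :=
  calc ⁅c * p, q⁆ = c * (p * q * p⁻¹) * c⁻¹ * q⁻¹ := by simp only [commutatorElement_def]; group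
    _ = p * q * p⁻¹ * (c * c⁻¹) * q⁻¹ := by rw [(hc _).eq]; group
    _ = ⁅p, q⁆ := by rw [mul_inv_cancel, mul_one, commutatorElement_def]

theorem commutatorElement_mul_right_of_commute {p d q : K} (hdp : Commute d p)
    (hd : Commute d ⁅p, q⁆) : ⁅p, d * q⁆ = ⁅p, q⁆ :=
  calc ⁅p, d * q⁆ = p * d * (q * p⁻¹ * q⁻¹) * d⁻¹ := by simp only [commutatorElement_def]; group
    _ = d * ⁅p, q⁆ * d⁻¹ := by rw [hdp.eq.symm, commutatorElement_def]; group
    _ = ⁅p, q⁆ := by rw [hd.eq]; group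

end Commutator

section AutAction

variable {G : Type*} [Group G]

theorem mul_inv_mem_lowerCentralSeries_add {φ : MulAut G} {k : ℕ}
    (hφ : ∀ x, φ x * x⁻¹ ∈ (⊤ : Subgroup G).lowerCentralSeries k) {m : ℕ} {x : G}
    (hx : x ∈ (⊤ : Subgroup G).lowerCentralSeries m) :
    φ x * x⁻¹ ∈ (⊤ : Subgroup G).lowerCentralSeries (m + k) := by
  induction m generalizing x with
  | zero => rw [zero_add]; exact hφ x
  | succ m ih =>
    set N := (⊤ : Subgroup G).lowerCentralSeries (m + 1 + k)
    let fixedModN : Subgroup G :=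
      ((QuotientGroup.mk' N).comp φ.toMonoidHom).eqLocus (QuotientGroup.mk' N)
    suffices (⊤ : Subgroup G).lowerCentralSeries (m + 1) ≤ fixedModN from
      mul_inv_mem_iff_mk_eq.mpr (this hx)
    rw [Subgroup.lowerCentralSeries_succ, Subgroup.commutator_le]
    intro p hp q _
    have hc : ∀ y : G ⧸ N, Commute ((φ p * p⁻¹ : G) : G ⧸ N) y := fun y =>
      QuotientGroup.induction_on y fun y =>
        commute_mk_lowerCentralSeries (j := 0) (by omega) (ih hp) (Subgroup.mem_top y)
    have hdp : Commute ((φ q * q⁻¹ : G) : G ⧸ N) p :=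
      commute_mk_lowerCentralSeries (by omega) (hφ q) hp
    have hd : Commute ((φ q * q⁻¹ : G) : G ⧸ N) ⁅(p : G ⧸ N), (q : G ⧸ N)⁆ := by
      have hpq : ⁅p, q⁆ ∈ (⊤ : Subgroup G).lowerCentralSeries (m + 1) :=
        Subgroup.commutator_mem_commutator hp (Subgroup.mem_top q)
      simpa [commutatorElement_def] using commute_mk_lowerCentralSeries (by omega) (hφ q) hpq
    have mk_eq (y : G) : (φ y : G ⧸ N) = ((φ y * y⁻¹ : G) : G ⧸ N) * y := by simp
    show (φ ⁅p, q⁆ : G ⧸ N) = ⁅p, q⁆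
    calc (φ ⁅p, q⁆ : G ⧸ N) = ⁅((φ p * p⁻¹ : G) : G ⧸ N) * p, ((φ q * q⁻¹ : G) : G ⧸ N) * q⁆ := by
          rw [← mk_eq, ← mk_eq]; simp [commutatorElement_def]
      _ = ⁅(p : G ⧸ N), (q : G ⧸ N)⁆ := by
          rw [commutatorElement_mul_left_of_forall_commute hc,
            commutatorElement_mul_right_of_commute hdp hd]
      _ = (⁅p, q⁆ : G) := by simp [commutatorElement_def]

def johnsonFiltration (G : Type*) [Group G] (k : ℕ) : Subgroup (MulAut G) :=
  autActKernel ((⊤ : Subgroup G).lowerCentralSeries k) fun φ _ hx => char_apply φ hx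

theorem mem_johnsonFiltration {k : ℕ} {φ : MulAut G} :
    φ ∈ johnsonFiltration G k ↔ ∀ x, φ x * x⁻¹ ∈ (⊤ : Subgroup G).lowerCentralSeries k :=
  Iff.rfl

theorem johnsonFiltration_antitone : Antitone (johnsonFiltration G) :=
  fun _ _ hij _ hφ x => Subgroup.lowerCentralSeries_antitone _ hij (hφ x)

theorem commutatorElement_mem_johnsonFiltration {j k : ℕ} {a b : MulAut G}
    (ha : a ∈ johnsonFiltration G j) (hb : b ∈ johnsonFiltration G k) :
    ⁅a, b⁆ ∈ johnsonFiltration G (j + k) := by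
  rw [mem_johnsonFiltration] at ha hb ⊢
  set N := (⊤ : Subgroup G).lowerCentralSeries (j + k)
  intro x
  obtain ⟨y, rfl⟩ : ∃ y, b (a y) = x := ⟨a⁻¹ (b⁻¹ x), by simp⟩
  have commutator_apply : ⁅a, b⁆ (b (a y)) = a (b y) := by
    simp [commutatorElement_def, MulAut.mul_apply]
  rw [commutator_apply, mul_inv_mem_iff_mk_eq]
  set c := a y * y⁻¹
  set d := b y * y⁻¹
  have hay : a y = c * y := by simp [c]
  have hby : b y = d * y := by simp [d]
  have hc : c ∈ (⊤ : Subgroup G).lowerCentralSeries j := ha y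
  have hd : d ∈ (⊤ : Subgroup G).lowerCentralSeries k := hb y
  clear_value c d
  have had : (a d : G ⧸ N) = d := by
    have h := mul_inv_mem_lowerCentralSeries_add ha hd
    rw [add_comm] at h
    exact mul_inv_mem_iff_mk_eq.mp h
  have hbc : (b c : G ⧸ N) = c := mul_inv_mem_iff_mk_eq.mp <| mul_inv_mem_lowerCentralSeries_add hb hc
  have hdc : Commute (d : G ⧸ N) c := commute_mk_lowerCentralSeries (by omega) hd hc
  calc (a (b y) : G ⧸ N) = (a d : G ⧸ N) * c * y := by rw [hby, map_mul, hay]; simp [mul_assoc]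
    _ = (b c : G ⧸ N) * d * y := by rw [had, hbc, hdc.eq]
    _ = b (a y) := by rw [hay, map_mul, hby]; simp [mul_assoc]

theorem commutator_johnsonFiltration_le (j k : ℕ) :
    ⁅johnsonFiltration G j, johnsonFiltration G k⁆ ≤ johnsonFiltration G (j + k) :=
  Subgroup.commutator_le.mpr fun _ ha _ hb => commutatorElement_mem_johnsonFiltration ha hb

end AutAction

theorem stmt6_general (n k : ℕ) (hk : 1 ≤ k) :
    ⁅IAF n 1, IAF n k⁆ ≤ IAF n (k + 1) ∧
    ∀ a b : MulAut (FreeGroup (Fin n)),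
      a ∈ IAF n k → b ∈ IAF n k → ⁅a, b⁆ ∈ IAF n (k + 1) := by
  have central : ⁅IAF n 1, IAF n k⁆ ≤ IAF n (k + 1) := by
    rw [add_comm]
    exact commutator_johnsonFiltration_le 1 k
  refine ⟨central, fun a b ha hb => central ?_⟩
  exact Subgroup.commutator_mem_commutator (johnsonFiltration_antitone hk ha) hb

/-- **Johnson filtration is central.**  For all `n, k ≥ 1` we have
`[IA_n, IA_n(k)] ⊆ IA_n(k+1)`; in particular (second conjunct) all commutators of elements of
`IA_n(k)` lie in `IA_n(k+1)`, so the quotient `IA_n(k) ⧸ IA_n(k+1)` is abelian. -/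
theorem stmt6 (n k : ℕ) (hn : 1 ≤ n) (hk : 1 ≤ k) :
    ⁅IAF n 1, IAF n k⁆ ≤ IAF n (k + 1) ∧
    ∀ a b : MulAut (FreeGroup (Fin n)),
      a ∈ IAF n k → b ∈ IAF n k → ⁅a, b⁆ ∈ IAF n (k + 1) :=
  stmt6_general n k hk
end

section
/- For every g ≥ 2 and every prime p, the group Sp_{2g}(ℤ, p) cannot be generated by fewer than 2g² + g elements. -/
open Matrix

/-- `2g × 2g` integer matrices, written in `g × g` block form with index set
`Fin g ⊕ Fin g`. -/
abbrev SpMat (g : ℕ) := Matrix (Fin g ⊕ Fin g) (Fin g ⊕ Fin g) ℤ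

/-- `sε_{ij}(r)`: the symmetric elementary `g × g` matrix, with `(i,j)` and `(j,i)` entries
equal to `r` (only `(i,i)` if `i = j`) and all other entries `0`. -/
def seps (g : ℕ) (r : ℤ) (i j : Fin g) : Matrix (Fin g) (Fin g) ℤ :=
  if i = j then Matrix.single i i r
  else Matrix.single i j r + Matrix.single j i r

/-- `β_i(r)`: the `g × g` matrix with `(i,i)` and `(i,i')` entries `r`, and `(i',i)` and
`(i',i')` entries `-r` (to be used with `i' = i + 1`). -/
def betaMat (g : ℕ) (r : ℤ) (i i' : Fin g) : Matrix (Fin g) (Fin g) ℤ :=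
  Matrix.single i i r + Matrix.single i i' r
    - Matrix.single i' i r - Matrix.single i' i' r

/-- The generator `𝓧_{ij}(r) = 1 + [[0,0],[sε_{ij}(r),0]]`. -/
def Xmat (g : ℕ) (r : ℤ) (i j : Fin g) : SpMat g :=
  1 + Matrix.fromBlocks 0 0 (seps g r i j) 0

/-- The generator `𝓨_{ij}(r) = 1 + [[0,sε_{ij}(r)],[0,0]]`. -/
def Ymat (g : ℕ) (r : ℤ) (i j : Fin g) : SpMat g :=
  1 + Matrix.fromBlocks 0 (seps g r i j) 0 0

/-- The generator `𝓩_{ij}(r) = 1 + [[ε_{ij}(r),0],[0,-ε_{ji}(r)]]`. -/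
def Zmat (g : ℕ) (r : ℤ) (i j : Fin g) : SpMat g :=
  1 + Matrix.fromBlocks (Matrix.single i j r) 0 0 (-(Matrix.single j i r))

/-- The generator `𝓦_i(r) = 1 + [[β_i(r),0],[0,-β_i(r)ᵀ]]` (with `i' = i + 1`). -/
def Wmat (g : ℕ) (r : ℤ) (i i' : Fin g) : SpMat g :=
  1 + Matrix.fromBlocks (betaMat g r i i') 0 0 (-(betaMat g r i i')ᵀ)

/-- The generator `𝓤_1(r) = 1 + [[ε_{11}(r),ε_{11}(r)],[-ε_{11}(r),-ε_{11}(r)]]`. -/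
def Umat (g : ℕ) (hg : 0 < g) (r : ℤ) : SpMat g :=
  1 + Matrix.fromBlocks (Matrix.single ⟨0, hg⟩ ⟨0, hg⟩ r)
    (Matrix.single ⟨0, hg⟩ ⟨0, hg⟩ r)
    (-(Matrix.single ⟨0, hg⟩ ⟨0, hg⟩ r))
    (-(Matrix.single ⟨0, hg⟩ ⟨0, hg⟩ r))

/-- The level-`p` congruence subgroup `Sp_{2g}(ℤ, p)` of the integral symplectic group: the
kernel of the reduction map `Sp_{2g}(ℤ) → Sp_{2g}(ℤ/p)`, i.e. the symplectic matrices congruent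
to the identity mod `p`. -/
def SpCong (g p : ℕ) : Subgroup (Matrix.symplecticGroup (Fin g) ℤ) where
  carrier := {M | ((M : SpMat g)).map (Int.castRingHom (ZMod p)) = 1}
  one_mem' := by
    show ((1 : SpMat g)).map _ = 1
    exact Matrix.map_one _ (by simp) (by simp)
  mul_mem' := by
    intro a b ha hb
    show (((a * b : Matrix.symplecticGroup (Fin g) ℤ) : SpMat g)).map
      (Int.castRingHom (ZMod p)) = 1
    have h : ((a * b : Matrix.symplecticGroup (Fin g) ℤ) : SpMat g) = (a : SpMat g) * b := rfl
    rw [h, Matrix.map_mul, show ((a : SpMat g)).map (Int.castRingHom (ZMod p)) = 1 from ha,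
      show ((b : SpMat g)).map (Int.castRingHom (ZMod p)) = 1 from hb, one_mul]
  inv_mem' := by
    intro a ha
    have h2 : ((a⁻¹ : Matrix.symplecticGroup (Fin g) ℤ) : SpMat g) * (a : SpMat g) = 1 := by
      have h1 : ((a⁻¹ * a : Matrix.symplecticGroup (Fin g) ℤ) : SpMat g) = 1 := by
        rw [inv_mul_cancel]; rfl
      rw [← h1]; rfl
    show (((a⁻¹ : Matrix.symplecticGroup (Fin g) ℤ) : SpMat g)).map (Int.castRingHom (ZMod p)) = 1
    have h3 := congrArg (fun m : SpMat g => m.map (Int.castRingHom (ZMod p))) h2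
    try simp only at h3
    rw [Matrix.map_mul, show ((a : SpMat g)).map (Int.castRingHom (ZMod p)) = 1 from ha,
      mul_one] at h3
    rw [h3]
    exact Matrix.map_one _ (by simp) (by simp)

/-! Write `M ∈ Sp_{2g}(ℤ, p)` as `1 + pA`. Since `(1 + pA)(1 + pB) = 1 + p(A + B) + p²AB`, the
map `M ↦ A mod p` is a homomorphism into the additive group of matrices over `𝔽_p`. Reading off
the top-left block and the upper triangles of the two off-diagonal blocks, it becomes a
homomorphism onto `𝔽_p^(2g² + g)`: the images of the elements `1 + pN`, for square-zero `N` in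
`𝔰𝔭_{2g}(ℤ)` (which makes `1 + pN` symplectic), already span. So any generating set maps onto a spanning set of a vector space of
dimension `2g² + g`. -/

namespace Matrix

section FirstOrder

variable {n : Type*} [DecidableEq n] {p : ℕ}

def subOneDiv (p : ℕ) (M : Matrix n n ℤ) : Matrix n n ℤ := (M - 1).map (· / (p : ℤ))

theorem subOneDiv_one_add_smul (hp : p ≠ 0) (A : Matrix n n ℤ) :
    subOneDiv p (1 + (p : ℤ) • A) = A := by
  ext i j
  simp only [subOneDiv, add_sub_cancel_left, map_apply, smul_apply, smul_eq_mul]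
  exact Int.mul_ediv_cancel_left _ (Int.natCast_ne_zero.mpr hp)

theorem map_one_add_smul_eq_one (A : Matrix n n ℤ) :
    (1 + (p : ℤ) • A).map (Int.castRingHom (ZMod p)) = 1 := by
  ext i j
  simp only [map_apply, add_apply, smul_apply, smul_eq_mul, map_add, map_mul, map_natCast,
    ZMod.natCast_self, zero_mul, add_zero]
  by_cases h : i = j <;> simp [one_apply, h]

theorem one_add_smul_subOneDiv {M : Matrix n n ℤ}
    (hM : M.map (Int.castRingHom (ZMod p)) = 1) : 1 + (p : ℤ) • subOneDiv p M = M := by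
  ext i j
  have hdvd : (p : ℤ) ∣ M i j - (1 : Matrix n n ℤ) i j := by
    have hij := congrFun (congrFun hM i) j
    rw [← ZMod.intCast_zmod_eq_zero_iff_dvd, Int.cast_sub]
    by_cases h : i = j <;> simp_all [one_apply]
  simp only [subOneDiv, add_apply, smul_apply, map_apply, smul_eq_mul, sub_apply,
    Int.mul_ediv_cancel' hdvd, add_sub_cancel]

variable [Fintype n]

theorem map_subOneDiv_one_add_smul_mul (hp : p ≠ 0) (A B : Matrix n n ℤ) :
    (subOneDiv p ((1 + (p : ℤ) • A) * (1 + (p : ℤ) • B))).map (Int.castRingHom (ZMod p)) =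
      A.map (Int.castRingHom (ZMod p)) + B.map (Int.castRingHom (ZMod p)) := by
  have hprod : (1 + (p : ℤ) • A) * (1 + (p : ℤ) • B) =
      1 + (p : ℤ) • (A + B + (p : ℤ) • (A * B)) := by
    simp only [mul_add, add_mul, one_mul, mul_one, smul_add, smul_mul_smul_comm, smul_smul]
    abel
  rw [hprod, subOneDiv_one_add_smul hp]
  ext i j
  simp only [map_apply, add_apply, smul_apply, smul_eq_mul, map_add, map_mul, map_natCast,
    ZMod.natCast_self, zero_mul, add_zero]

def firstOrderHom {G : Type*} [Group G] (hp : p ≠ 0) (ρ : G →* Matrix n n ℤ)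
    (hρ : ∀ x, (ρ x).map (Int.castRingHom (ZMod p)) = 1) :
    G →* Multiplicative (Matrix n n (ZMod p)) where
  toFun x := .ofAdd ((subOneDiv p (ρ x)).map (Int.castRingHom (ZMod p)))
  map_one' := by
    rw [map_one, ← add_zero 1, ← smul_zero (p : ℤ), subOneDiv_one_add_smul hp]
    simp
  map_mul' x y := by
    rw [map_mul, ← one_add_smul_subOneDiv (hρ x), ← one_add_smul_subOneDiv (hρ y),
      map_subOneDiv_one_add_smul_mul hp, subOneDiv_one_add_smul hp, subOneDiv_one_add_smul hp]
    rfl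

theorem firstOrderHom_apply {G : Type*} [Group G] (hp : p ≠ 0) (ρ : G →* Matrix n n ℤ)
    (hρ : ∀ x, (ρ x).map (Int.castRingHom (ZMod p)) = 1) (x : G) :
    firstOrderHom hp ρ hρ x = .ofAdd ((subOneDiv p (ρ x)).map (Int.castRingHom (ZMod p))) :=
  rfl

end FirstOrder

variable {l R : Type*} [Fintype l] [DecidableEq l] [CommRing R]

theorem one_add_smul_mem_symplecticGroup {N : Matrix (l ⊕ l) (l ⊕ l) R}
    (hN : N ∈ LieAlgebra.Symplectic.sp l R) (hN2 : N * N = 0) (r : R) :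
    1 + r • N ∈ symplecticGroup l R := by
  have hskew : Nᵀ * J l R = -(J l R * N) := by
    simpa [LieAlgebra.Symplectic.sp, mem_skewAdjointMatricesSubmodule, Matrix.IsSkewAdjoint,
      IsAdjointPair] using hN
  have hquad : Nᵀ * J l R * N = 0 := by
    rw [hskew, Matrix.neg_mul, Matrix.mul_assoc, hN2, Matrix.mul_zero, neg_zero]
  rw [SymplecticGroup.mem_iff', transpose_add, transpose_one, transpose_smul]
  calc (1 + r • Nᵀ) * J l R * (1 + r • N)
      = J l R + r • (Nᵀ * J l R + J l R * N) + (r * r) • (Nᵀ * J l R * N) := by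
        simp only [add_mul, mul_add, one_mul, mul_one, smul_mul_assoc, mul_smul_comm]
        module
    _ = J l R := by rw [hquad, hskew, neg_add_cancel, smul_zero, smul_zero, add_zero, add_zero]

theorem fromBlocks_mem_sp {A B C D : Matrix l l R} (hB : Bᵀ = B) (hC : Cᵀ = C) (hD : Dᵀ = -A) :
    fromBlocks A B C D ∈ LieAlgebra.Symplectic.sp l R := by
  have hA : Aᵀ = -D := by rw [← neg_neg A, ← hD, transpose_neg, transpose_transpose]
  simp only [LieAlgebra.Symplectic.sp, mem_skewAdjointMatricesLieSubalgebra,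
    mem_skewAdjointMatricesSubmodule, Matrix.IsSkewAdjoint, IsAdjointPair, J,
    fromBlocks_transpose, fromBlocks_neg, fromBlocks_multiply, hA, hB, hC, hD]
  simp

end Matrix

theorem finrank_le_ncard_of_closure_eq_top {G K V : Type*} [Group G] [Ring K]
    [StrongRankCondition K] [AddCommGroup V] [Module K V] (f : G →* Multiplicative V)
    (hf : Submodule.span K (Set.range fun x => (f x).toAdd) = ⊤) {S : Set G}
    (hS : Subgroup.closure S = ⊤) (hSfin : S.Finite) : Module.finrank K V ≤ S.ncard := by
  set T := (fun x => (f x).toAdd) '' S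
  have hspan : Submodule.span K T = ⊤ := by
    rw [eq_top_iff, ← hf, Submodule.span_le]
    rintro _ ⟨x, rfl⟩
    have hx : x ∈ Subgroup.closure S := hS ▸ Subgroup.mem_top x
    induction hx using Subgroup.closure_induction with
    | mem y hy => exact Submodule.subset_span ⟨y, hy, rfl⟩
    | one => simp
    | mul y z _ _ hy hz => simpa using add_mem hy hz
    | inv y _ hy => simpa using neg_mem hy
  have := (hSfin.image fun x => (f x).toAdd).fintype
  calc Module.finrank K V = Module.finrank K (Submodule.span K T) := by rw [hspan, finrank_top]
    _ ≤ T.toFinset.card := finrank_span_le_card T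
    _ = T.ncard := (Set.ncard_eq_toFinset_card' T).symm
    _ ≤ S.ncard := Set.ncard_image_le hSfin

theorem seps_transpose {g : ℕ} (r : ℤ) (i j : Fin g) : (seps g r i j)ᵀ = seps g r i j := by
  unfold seps
  split_ifs <;> simp [transpose_single, add_comm]

theorem seps_one_apply {g : ℕ} {a b c d : Fin g} (hab : a ≤ b) (hcd : c ≤ d) :
    seps g 1 a b c d = if a = c ∧ b = d then 1 else 0 := by
  unfold seps
  split_ifs <;> simp_all [single_apply]; omega

abbrev UpperPair (g : ℕ) := {q : Fin g × Fin g // q.1 ≤ q.2}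

theorem two_mul_card_upperPair (g : ℕ) : 2 * Fintype.card (UpperPair g) = (g + 1) * g := by
  rw [← Fintype.card_congr Sym2.sortEquiv, Sym2.card, Fintype.card_fin, Nat.choose_two_right,
    Nat.add_sub_cancel]
  exact Nat.mul_div_cancel' (Nat.even_mul_pred_self (g + 1)).two_dvd

/-- Coordinates on `𝔰𝔭_{2g}`: the whole top-left block, and the upper triangles (diagonal
included) of the top-right and bottom-left blocks, which are symmetric. -/
abbrev SpCoord (g : ℕ) := (Fin g × Fin g) ⊕ UpperPair g ⊕ UpperPair g

theorem card_spCoord (g : ℕ) : Fintype.card (SpCoord g) = 2 * g ^ 2 + g := by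
  simp only [Fintype.card_sum, Fintype.card_prod, Fintype.card_fin]
  linarith [two_mul_card_upperPair g]

section Coordinates

variable {g : ℕ}

def SpCoord.entry : SpCoord g → (Fin g ⊕ Fin g) × (Fin g ⊕ Fin g)
  | .inl q => (.inl q.1, .inl q.2)
  | .inr (.inl q) => (.inl q.1.1, .inr q.1.2)
  | .inr (.inr q) => (.inr q.1.1, .inl q.1.2)

def spCoords (K : Type*) [CommSemiring K] :
    Matrix (Fin g ⊕ Fin g) (Fin g ⊕ Fin g) K →ₗ[K] (SpCoord g → K) where
  toFun N k := N k.entry.1 k.entry.2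
  map_add' _ _ := rfl
  map_smul' _ _ := rfl

theorem spCoords_fromBlocks_single {R : Type*} [CommRing R] (i j : Fin g)
    (D : Matrix (Fin g) (Fin g) R) :
    spCoords R (fromBlocks (single i j 1) 0 0 D) = Pi.single (.inl (i, j)) 1 := by
  ext ((⟨a, b⟩ | q | q)) <;>
    simp [spCoords, SpCoord.entry, single_apply, Pi.single_apply, eq_comm]

theorem spCoords_fromBlocks_seps_upper (q : UpperPair g) :
    spCoords ℤ (fromBlocks 0 (seps g 1 q.1.1 q.1.2) 0 0) = Pi.single (.inr (.inl q)) 1 := by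
  ext ((⟨a, b⟩ | q' | q'))
  · simp [spCoords, SpCoord.entry]
  · simp [spCoords, SpCoord.entry, Pi.single_apply, seps_one_apply q.2 q'.2, Subtype.ext_iff,
      Prod.ext_iff, eq_comm]
  · simp [spCoords, SpCoord.entry]

theorem spCoords_fromBlocks_seps_lower (q : UpperPair g) :
    spCoords ℤ (fromBlocks 0 0 (seps g 1 q.1.1 q.1.2) 0) = Pi.single (.inr (.inr q)) 1 := by
  ext ((⟨a, b⟩ | q' | q'))
  · simp [spCoords, SpCoord.entry]
  · simp [spCoords, SpCoord.entry]
  · simp [spCoords, SpCoord.entry, Pi.single_apply, seps_one_apply q.2 q'.2, Subtype.ext_iff,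
      Prod.ext_iff, eq_comm]

theorem spCoords_fromBlocks_single_diag (i : Fin g) :
    spCoords ℤ (fromBlocks (single i i 1) (single i i 1) (-single i i 1) (-single i i 1)) =
      Pi.single (.inl (i, i)) 1 + Pi.single (.inr (.inl ⟨(i, i), le_rfl⟩)) 1 -
        Pi.single (.inr (.inr ⟨(i, i), le_rfl⟩)) 1 := by
  have hE : seps g 1 i i = single i i 1 := if_pos rfl
  rw [← spCoords_fromBlocks_single i i (-single i i 1), ← spCoords_fromBlocks_seps_upper,
    ← spCoords_fromBlocks_seps_lower, ← map_add, ← map_sub, sub_eq_add_neg, fromBlocks_neg,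
    fromBlocks_add, fromBlocks_add]
  simp [hE]

end Coordinates

namespace SpCong

variable {g p : ℕ}

def ofSqZero (N : SpMat g) (hN : N ∈ LieAlgebra.Symplectic.sp (Fin g) ℤ) (hN2 : N * N = 0) :
    SpCong g p :=
  ⟨⟨1 + (p : ℤ) • N, one_add_smul_mem_symplecticGroup hN hN2 _⟩, map_one_add_smul_eq_one N⟩

def firstOrderHom (hp : p ≠ 0) :
    SpCong g p →* Multiplicative (Matrix (Fin g ⊕ Fin g) (Fin g ⊕ Fin g) (ZMod p)) :=
  Matrix.firstOrderHom hp ((symplecticGroup (Fin g) ℤ).subtype.comp (SpCong g p).subtype)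
    fun M => M.2

theorem firstOrderHom_ofSqZero (hp : p ≠ 0) (N : SpMat g)
    (hN : N ∈ LieAlgebra.Symplectic.sp (Fin g) ℤ) (hN2 : N * N = 0) :
    firstOrderHom hp (ofSqZero N hN hN2) = .ofAdd (N.map (Int.castRingHom (ZMod p))) := by
  have hρ : ((symplecticGroup (Fin g) ℤ).subtype.comp (SpCong g p).subtype)
      (ofSqZero N hN hN2) = 1 + (p : ℤ) • N := rfl
  refine (Matrix.firstOrderHom_apply hp _ _ _).trans ?_
  rw [hρ, subOneDiv_one_add_smul hp]

def coordHom (hp : p ≠ 0) : SpCong g p →* Multiplicative (SpCoord g → ZMod p) :=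
  (spCoords (ZMod p)).toAddMonoidHom.toMultiplicative.comp (firstOrderHom hp)

theorem span_range_coordHom (hp : p ≠ 0) :
    Submodule.span (ZMod p) (Set.range fun M : SpCong g p => (coordHom hp M).toAdd) = ⊤ := by
  set V := Submodule.span (ZMod p) (Set.range fun M : SpCong g p => (coordHom hp M).toAdd)
  let W : AddSubgroup (SpCoord g → ℤ) :=
    V.toAddSubgroup.comap ((Int.castAddHom (ZMod p)).compLeft _)
  have hW (N : SpMat g) (hN : N ∈ LieAlgebra.Symplectic.sp (Fin g) ℤ) (hN2 : N * N = 0) :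
      spCoords ℤ N ∈ W :=
    Submodule.subset_span ⟨ofSqZero N hN hN2, by simp [coordHom, firstOrderHom_ofSqZero]; rfl⟩
  have hupper (q : UpperPair g) : Pi.single (.inr (.inl q)) 1 ∈ W := by
    rw [← spCoords_fromBlocks_seps_upper]
    exact hW _ (fromBlocks_mem_sp (seps_transpose ..) (by simp) (by simp))
      (by simp [fromBlocks_multiply])
  have hlower (q : UpperPair g) : Pi.single (.inr (.inr q)) 1 ∈ W := by
    rw [← spCoords_fromBlocks_seps_lower]
    exact hW _ (fromBlocks_mem_sp (by simp) (seps_transpose ..) (by simp))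
      (by simp [fromBlocks_multiply])
  have hoffDiag (i j : Fin g) (hij : i ≠ j) : Pi.single (.inl (i, j)) 1 ∈ W := by
    rw [← spCoords_fromBlocks_single i j (-single j i 1)]
    exact hW _ (fromBlocks_mem_sp (by simp) (by simp) (by simp))
      (by simp [fromBlocks_multiply, single_mul_single_of_ne, hij, hij.symm])
  -- A square-zero element of `𝔰𝔭` with top-left block `E_ii` has nonzero off-diagonal blocks,
  -- so the diagonal coordinates are only reached through a combination (the paper's `𝓤`).
  have hdiag (i : Fin g) : Pi.single (.inl (i, i)) 1 ∈ W := by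
    have hU := hW (fromBlocks (single i i 1) (single i i 1) (-single i i 1) (-single i i 1))
      (fromBlocks_mem_sp (by simp) (by simp) (by simp)) (by simp [fromBlocks_multiply])
    rw [spCoords_fromBlocks_single_diag] at hU
    convert add_mem (sub_mem hU (hupper ⟨(i, i), le_rfl⟩)) (hlower ⟨(i, i), le_rfl⟩) using 1
    abel
  rw [eq_top_iff, ← (Pi.basisFun (ZMod p) (SpCoord g)).span_eq, Submodule.span_le]
  rintro _ ⟨k, rfl⟩
  have hk : Pi.single k 1 ∈ W := by
    rcases k with ⟨i, j⟩ | q | q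
    · obtain rfl | hij := eq_or_ne i j
      exacts [hdiag i, hoffDiag i j hij]
    exacts [hupper q, hlower q]
  have hcast : (Int.castAddHom (ZMod p)).compLeft _ (Pi.single k 1) = Pi.single k 1 := by
    ext k'
    by_cases h : k' = k <;> simp [h]
  simpa [W, hcast] using hk

end SpCong

theorem stmt10_general (g p : ℕ) (hp : p.Prime)
    (S : Set (SpCong g p)) (hgen : Subgroup.closure S = ⊤) (hfin : S.Finite) :
    2 * g ^ 2 + g ≤ S.ncard := by
  have := Fact.mk hp
  calc 2 * g ^ 2 + g = Module.finrank (ZMod p) (SpCoord g → ZMod p) := by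
        rw [Module.finrank_fintype_fun_eq_card, card_spCoord]
    _ ≤ S.ncard := finrank_le_ncard_of_closure_eq_top (SpCong.coordHom hp.ne_zero)
        (SpCong.span_range_coordHom hp.ne_zero) hgen hfin

/-- **Minimal number of generators of `Sp_{2g}(ℤ, p)`.**  For `g ≥ 2` and a prime `p`, the
group `Sp_{2g}(ℤ, p)` cannot be generated by fewer than `2g² + g` elements: any generating
set has at least `2g² + g` elements. -/
theorem stmt10 (g p : ℕ) (hg : 2 ≤ g) (hp : p.Prime)
    (S : Set (SpCong g p)) (hgen : Subgroup.closure S = ⊤) (hfin : S.Finite) :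
    2 * g ^ 2 + g ≤ S.ncard :=
  stmt10_general g p hp S hgen hfin
end

section
/- Let G be a weak FI-group, let H ⊴ G be a normal weak FI-subgroup, and fix N ≥ 0. Then the collection H^{≤N}, defined by letting H_J^{≤N} be the subgroup of H_J generated by the G_J-conjugates of the subgroups H_J(I) over all I ⊆ J with |I| ≤ N, is itself a normal weak FI-subgroup of G: each H_J^{≤N} is normal in G_J, and G_f(H_J^{≤N}) ⊆ H_K^{≤N} for every injection f : J ↪ K between finite subsets of ℕ. -/
/-!
Each generator `G_I^J(h)` of `H_J^{≤N}` (with `h ∈ H_I`, `|I| ≤ N`) is sent by `G_f` to an element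
conjugate to `G_{f ∘ i}(h)`. The injection `f ∘ i : I ↪ K` factors as a bijection `I → I'` onto
its image followed by the inclusion `I' ⊆ K`, so up to conjugacy this is `G_{I'}^K` applied to an
element of `H_{I'}`, with `|I'| = |I| ≤ N`. Since `H_K^{≤N}` is normal, conjugacy is harmless.
-/

universe u

/-- Two homomorphisms `A →* B` are conjugate if they differ by post-composition with an inner
automorphism of `B`; a *homomorphism-modulo-conjugacy* is an equivalence class for this
relation. -/
def HomConj {A B : Type*} [Group A] [Group B] (f g : A →* B) : Prop :=
  ∃ b : B, ∀ a : A, g a = b * f a * b⁻¹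

/-- The inclusion function `↥I → ↥J` of a pair of finite sets `I ⊆ J ⊆ ℕ`. -/
def finsetIncl {I J : Finset ℕ} (h : I ⊆ J) : I → J := fun x => ⟨x.1, h x.2⟩

theorem finsetIncl_injective {I J : Finset ℕ} (h : I ⊆ J) :
    Function.Injective (finsetIncl h) := by
  intro a b hab
  have h' := congrArg Subtype.val hab
  exact Subtype.ext h'

/-- A **weak FI-group**: a group `G_I` for each finite subset `I ⊆ ℕ`; a
homomorphism-modulo-conjugacy `G_f : G_I → G_J` for each injection `f : I ↪ J` (presented here
by a representative homomorphism `map f`, with the compatibility conditions `G_{id} = id` and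
`G_{g∘f} = G_g ∘ G_f` holding up to conjugacy); and a genuine homomorphism `G_I^J = incl h` for
each pair `I ⊆ J`, representing `G_{i_I^J}` and satisfying `G_J^K ∘ G_I^J = G_I^K` on the
nose. -/
structure WeakFIGroup where
  G : Finset ℕ → Type u
  [grp : ∀ I, Group (G I)]
  map : ∀ {I J : Finset ℕ} (f : I → J), Function.Injective f → (G I →* G J)
  incl : ∀ {I J : Finset ℕ}, I ⊆ J → (G I →* G J)
  map_id : ∀ I : Finset ℕ, HomConj (map (id : I → I) fun _ _ h => h) (MonoidHom.id (G I))
  map_comp : ∀ {I J K : Finset ℕ} (f : I → J) (g : J → K)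
      (hf : Function.Injective f) (hg : Function.Injective g),
      HomConj (map (g ∘ f) (hg.comp hf)) ((map g hg).comp (map f hf))
  incl_represents : ∀ {I J : Finset ℕ} (h : I ⊆ J),
      HomConj (map (finsetIncl h) (finsetIncl_injective h)) (incl h)
  incl_comp : ∀ {I J K : Finset ℕ} (hIJ : I ⊆ J) (hJK : J ⊆ K),
      (incl hJK).comp (incl hIJ) = incl (hIJ.trans hJK)

attribute [instance] WeakFIGroup.grp

/-- A **normal weak FI-subgroup** `H ⊴ G`: a normal subgroup `H_I ⊴ G_I` for each finite
`I ⊆ ℕ`, with `G_f(H_I) ⊆ H_J` for every injection `f : I ↪ J` (this image is well defined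
since `H_J` is normal). -/
structure NormalWeakFISub (𝒢 : WeakFIGroup.{u}) where
  H : ∀ I : Finset ℕ, Subgroup (𝒢.G I)
  normal : ∀ I : Finset ℕ, (H I).Normal
  stable : ∀ {I J : Finset ℕ} (f : I → J) (hf : Function.Injective f),
      (H I).map (𝒢.map f hf) ≤ H J

/-- `G` is *boundedly generated in degree `A`* if for every finite set `J ⊆ ℕ`, the group
`G_J` is generated by its subgroups `G_J(I) = G_I^J(G_I)` over all `I ⊆ J` with `|I| ≤ A`. -/
def WeakFIGroup.BoundedlyGenerated (𝒢 : WeakFIGroup.{u}) (A : ℕ) : Prop :=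
  ∀ J : Finset ℕ,
    (⨆ (I : Finset ℕ) (hIJ : I ⊆ J) (_ : I.card ≤ A),
      Subgroup.map (𝒢.incl hIJ) ⊤) = (⊤ : Subgroup (𝒢.G J))

/-- `H_J^{≤N}`: the subgroup of `H_J` generated by the `G_J`-conjugates of the subgroups
`H_J(I) = G_I^J(H_I)` over all `I ⊆ J` with `|I| ≤ N`. -/
def NormalWeakFISub.leN {𝒢 : WeakFIGroup.{u}} (H : NormalWeakFISub 𝒢) (N : ℕ)
    (J : Finset ℕ) : Subgroup (𝒢.G J) :=
  Subgroup.normalClosure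
    (⋃ (I : Finset ℕ) (hIJ : I ⊆ J) (_ : I.card ≤ N),
      ((H.H I).map (𝒢.incl hIJ) : Set (𝒢.G J)))

/-- `H ⊴ G` is *boundedly normally generated in degree `B`* if for every finite set `J ⊆ ℕ`,
the group `H_J` is generated by the `G_J`-conjugates of its subgroups `H_J(I)` over all
`I ⊆ J` with `|I| ≤ B`. -/
def NormalWeakFISub.BoundedlyNormallyGenerated {𝒢 : WeakFIGroup.{u}}
    (H : NormalWeakFISub 𝒢) (B : ℕ) : Prop :=
  ∀ J : Finset ℕ, H.leN B J = H.H J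

/-- A **central filtration** `{G(k)}_{k ≥ 1}` of a weak FI-group `G`, reindexed here so that
`filt k = G(k+1)`: normal weak FI-subgroups with `G(1) = G`, `G(k) ⊇ G(k+1)`, and
`[G, G(k)] ⊆ G(k+1)` for all `k ≥ 1`. -/
structure CentralFiltration (𝒢 : WeakFIGroup.{u}) where
  filt : ℕ → NormalWeakFISub 𝒢
  filt_zero : ∀ I : Finset ℕ, (filt 0).H I = ⊤
  filt_antitone : ∀ (k : ℕ) (I : Finset ℕ), (filt (k + 1)).H I ≤ (filt k).H I
  central : ∀ (k : ℕ) (I : Finset ℕ),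
      ⁅(⊤ : Subgroup (𝒢.G I)), (filt k).H I⁆ ≤ (filt (k + 1)).H I

instance CentralFiltration.normal_subgroupOf {𝒢 : WeakFIGroup.{u}}
    (C : CentralFiltration 𝒢) (k : ℕ) (I : Finset ℕ) :
    (((C.filt (k + 1)).H I).subgroupOf ((C.filt k).H I)).Normal :=
  ((C.filt (k + 1)).normal I).subgroupOf _

/-- The central filtration has *finite rank* if each abelian group `G(k)_I ⧸ G(k+1)_I` is
finitely generated. -/
def CentralFiltration.FiniteRank {𝒢 : WeakFIGroup.{u}} (C : CentralFiltration 𝒢) : Prop :=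
  ∀ (k : ℕ) (I : Finset ℕ),
    Group.FG ((C.filt k).H I ⧸ ((C.filt (k + 1)).H I).subgroupOf ((C.filt k).H I))

theorem HomConj.apply_mem_iff {A B : Type*} [Group A] [Group B] {f g : A →* B} (hfg : HomConj f g)
    {S : Subgroup B} (hS : S.Normal) (a : A) : g a ∈ S ↔ f a ∈ S := by
  obtain ⟨b, hb⟩ := hfg
  rw [hb a]
  refine ⟨fun h => ?_, fun h => hS.conj_mem _ h b⟩
  simpa [mul_assoc] using hS.conj_mem _ h b⁻¹

theorem HomConj.comp_left {A B C : Type*} [Group A] [Group B] [Group C] {f g : A →* B}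
    (hfg : HomConj f g) (φ : B →* C) : HomConj (φ.comp f) (φ.comp g) := by
  obtain ⟨b, hb⟩ := hfg
  exact ⟨φ b, fun a => by simp [hb a]⟩

theorem exists_finsetIncl_comp_eq {I K : Finset ℕ} (φ : I → K) (hφ : Function.Injective φ) :
    ∃ (I' : Finset ℕ) (hI'K : I' ⊆ K) (g : I → I'),
      Function.Injective g ∧ I'.card = I.card ∧ φ = finsetIncl hI'K ∘ g := by
  classical
  let e : I ↪ ℕ := ⟨fun x => (φ x : ℕ), fun _ _ h => hφ (Subtype.ext h)⟩
  refine ⟨I.attach.map e, ?_, fun x => ⟨e x, Finset.mem_map_of_mem e (Finset.mem_attach _ x)⟩,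
    fun _ _ h => e.injective (congrArg Subtype.val h :), by simp, rfl⟩
  intro n hn
  obtain ⟨x, -, rfl⟩ := Finset.mem_map.1 hn
  exact (φ x).2

namespace NormalWeakFISub

variable {𝒢 : WeakFIGroup.{u}} (H : NormalWeakFISub 𝒢) (N : ℕ)

theorem leN_normal (J : Finset ℕ) : (H.leN N J).Normal :=
  Subgroup.normalClosure_normal

theorem incl_mem_leN {I J : Finset ℕ} (hIJ : I ⊆ J) (hI : I.card ≤ N) {h : 𝒢.G I}
    (hh : h ∈ H.H I) : 𝒢.incl hIJ h ∈ H.leN N J :=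
  Subgroup.subset_normalClosure <|
    Set.mem_iUnion.2 ⟨I, Set.mem_iUnion.2 ⟨hIJ, Set.mem_iUnion.2 ⟨hI, ⟨h, hh, rfl⟩⟩⟩⟩

theorem map_mem_leN {I K : Finset ℕ} (φ : I → K) (hφ : Function.Injective φ) (hI : I.card ≤ N)
    {h : 𝒢.G I} (hh : h ∈ H.H I) : 𝒢.map φ hφ h ∈ H.leN N K := by
  obtain ⟨I', hI'K, g, hg, hcard, rfl⟩ := exists_finsetIncl_comp_eq φ hφ
  have hgh : 𝒢.map g hg h ∈ H.H I' := H.stable g hg ⟨h, hh, rfl⟩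
  rw [← (𝒢.map_comp g _ hg (finsetIncl_injective hI'K)).apply_mem_iff (H.leN_normal N K),
    MonoidHom.comp_apply,
    ← (𝒢.incl_represents hI'K).apply_mem_iff (H.leN_normal N K)]
  exact H.incl_mem_leN N hI'K (hcard.trans_le hI) hgh

theorem map_leN_le {J K : Finset ℕ} (f : J → K) (hf : Function.Injective f) :
    (H.leN N J).map (𝒢.map f hf) ≤ H.leN N K := by
  have hS := H.leN_normal N K
  rw [Subgroup.map_le_iff_le_comap]
  refine Subgroup.normalClosure_le_normal ?_
  simp only [Set.iUnion_subset_iff]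
  rintro I hIJ hI _ ⟨h, hh, rfl⟩
  rw [SetLike.mem_coe, Subgroup.mem_comap, ← MonoidHom.comp_apply,
    ((𝒢.incl_represents hIJ).comp_left (𝒢.map f hf)).apply_mem_iff hS,
    (𝒢.map_comp _ f (finsetIncl_injective hIJ) hf).apply_mem_iff hS]
  exact H.map_mem_leN N _ _ hI hh

end NormalWeakFISub

/-- **`H^{≤N}` is a normal weak FI-subgroup.**  For a weak FI-group `G`, a normal weak
FI-subgroup `H ⊴ G` and `N ≥ 0`, the collection `H^{≤N}` (where `H_J^{≤N}` is generated by the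
`G_J`-conjugates of the subgroups `H_J(I)` with `I ⊆ J`, `|I| ≤ N`) is itself a normal weak
FI-subgroup of `G`: each `H_J^{≤N}` is normal in `G_J`, and `G_f(H_J^{≤N}) ⊆ H_K^{≤N}` for
every injection `f : J ↪ K`. -/
theorem stmt14 (𝒢 : WeakFIGroup.{u}) (H : NormalWeakFISub 𝒢) (N : ℕ) :
    (∀ J : Finset ℕ, (H.leN N J).Normal) ∧
    (∀ {J K : Finset ℕ} (f : J → K) (hf : Function.Injective f),
      (H.leN N J).map (𝒢.map f hf) ≤ H.leN N K) :=
  ⟨H.leN_normal N, H.map_leN_le N⟩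
end
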